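/- arXiv:2602.06222 — 7 statements merged into one kernel-verified Lean document; each statement's English description precedes it below -/
import Mathlib

section
/- In D = Z[(1+√-23)/2], the identity 8 = 2·2·2 = ((3+√-23)/2)·((3-√-23)/2) holds, giving two factorizations of 8 into atoms of lengths 3 and 2 respectively. -/
open Polynomial

/-- `D = ℤ[α]` where `α = (1+√-23)/2` is a root of `X² - X + 6`. -/
noncomputable abbrev Dring : Type := AdjoinRoot ((X : ℤ[X]) ^ 2 - X + C 6)

/-- `α = (1+√-23)/2` as an element of `D`. -/
noncomputable abbrev Dalpha : Dring := AdjoinRoot.root ((X : ℤ[X]) ^ 2 - X + C 6)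

namespace Dstuff

noncomputable abbrev fpoly : ℤ[X] := (X : ℤ[X]) ^ 2 - X + C 6

lemma fmonic : fpoly.Monic := by unfold fpoly; monicity!

lemma fdeg : fpoly.degree = 2 := by unfold fpoly; compute_degree!

def Cm : Matrix (Fin 2) (Fin 2) ℤ := !![0, -6; 1, 1]

lemma intCast_fin_two (a : ℤ) : (a : Matrix (Fin 2) (Fin 2) ℤ) = !![a, 0; 0, a] := by
  ext i j; fin_cases i <;> fin_cases j <;> rfl

lemma aeval_f : aeval Cm fpoly = 0 := by
  have : (aeval Cm) fpoly = Cm ^ 2 - Cm + 6 := by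
    simp [fpoly, map_ofNat]
  rw [this]
  ext i j
  fin_cases i <;> fin_cases j <;>
    simp [Cm, pow_two, Matrix.mul_apply, Fin.sum_univ_two, Matrix.ofNat_fin_two]

noncomputable def phi : Dring →+* Matrix (Fin 2) (Fin 2) ℤ :=
  Ideal.Quotient.lift _ (aeval Cm).toRingHom (by
    intro p hp
    rw [Ideal.mem_span_singleton] at hp
    obtain ⟨q, rfl⟩ := hp
    show aeval Cm (fpoly * q) = 0
    rw [map_mul, aeval_f, zero_mul])

lemma phi_mk (p : ℤ[X]) : phi (AdjoinRoot.mk fpoly p) = aeval Cm p := rfl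

lemma phi_alpha : phi Dalpha = Cm := by
  show phi (AdjoinRoot.mk fpoly X) = Cm
  rw [phi_mk, aeval_X]

noncomputable def nrm (x : Dring) : ℤ := (phi x).det

lemma nrm_mul (x y : Dring) : nrm (x * y) = nrm x * nrm y := by
  simp [nrm, map_mul, Matrix.det_mul]

lemma phi_rep (a b : ℤ) : phi ((a : Dring) + b * Dalpha) = !![a, -6*b; b, a+b] := by
  rw [map_add, map_mul, phi_alpha, map_intCast, map_intCast, intCast_fin_two, intCast_fin_two]
  ext i j
  fin_cases i <;> fin_cases j <;> simp [Cm, Matrix.mul_apply, Fin.sum_univ_two] <;> ring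

lemma nrm_rep (a b : ℤ) : nrm ((a : Dring) + b * Dalpha) = a^2 + a*b + 6*b^2 := by
  rw [nrm, phi_rep, Matrix.det_fin_two_of]; ring

lemma exists_rep (x : Dring) : ∃ a b : ℤ, x = (a : Dring) + b * Dalpha := by
  induction x using AdjoinRoot.induction_on with
  | _ p =>
    refine ⟨(p %ₘ fpoly).coeff 0, (p %ₘ fpoly).coeff 1, ?_⟩
    have h2 : (p %ₘ fpoly).degree ≤ 1 := by
      have h := degree_modByMonic_lt p fmonic
      rw [fdeg] at h
      rw [show (2 : WithBot ℕ) = Order.succ 1 from rfl] at h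
      exact Order.le_of_lt_succ h
    have h3 : p %ₘ fpoly = C ((p %ₘ fpoly).coeff 1) * X + C ((p %ₘ fpoly).coeff 0) :=
      eq_X_add_C_of_degree_le_one h2
    have h1 : p = fpoly * (p /ₘ fpoly) + (C ((p %ₘ fpoly).coeff 1) * X + C ((p %ₘ fpoly).coeff 0)) := by
      rw [← h3]; linear_combination (modByMonic_add_div p fpoly).symm
    calc AdjoinRoot.mk fpoly p
        = AdjoinRoot.mk fpoly (fpoly * (p /ₘ fpoly) + (C ((p %ₘ fpoly).coeff 1) * X + C ((p %ₘ fpoly).coeff 0))) := by rw [← h1]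
      _ = ((p %ₘ fpoly).coeff 0 : Dring) + ((p %ₘ fpoly).coeff 1) * Dalpha := by
          rw [map_add, map_mul, AdjoinRoot.mk_self, zero_mul, zero_add, map_add, map_mul,
            AdjoinRoot.mk_C, AdjoinRoot.mk_C, AdjoinRoot.mk_X]
          simp only [eq_intCast]
          ring

end Dstuff

namespace Dstuff

lemma nrm_nonneg (x : Dring) : 0 ≤ nrm x := by
  obtain ⟨a, b, rfl⟩ := exists_rep x
  rw [nrm_rep]
  nlinarith [sq_nonneg (2*a+b), sq_nonneg b]

lemma isUnit_of_nrm_eq_one (x : Dring) (h : nrm x = 1) : IsUnit x := by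
  obtain ⟨a, b, rfl⟩ := exists_rep x
  rw [nrm_rep] at h
  have hb : b = 0 := by
    rcases eq_or_ne b 0 with h0 | h0
    · exact h0
    · have h1 : 1 ≤ b^2 := by rcases lt_or_gt_of_ne h0 with h'|h' <;> nlinarith
      nlinarith [sq_nonneg (2*a+b)]
  subst hb
  have ha : IsUnit a := IsUnit.of_mul_eq_one a (by nlinarith)
  simpa using ha.map (Int.castRingHom Dring)

lemma nrm_ne_two (x : Dring) : nrm x ≠ 2 := by
  obtain ⟨a, b, rfl⟩ := exists_rep x
  rw [nrm_rep]
  intro h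
  have hb : b = 0 := by
    rcases eq_or_ne b 0 with h0 | h0
    · exact h0
    · have h1 : 1 ≤ b^2 := by rcases lt_or_gt_of_ne h0 with h'|h' <;> nlinarith
      nlinarith [sq_nonneg (2*a+b)]
  subst hb
  have : a ≤ -2 ∨ a = -1 ∨ a = 0 ∨ a = 1 ∨ 2 ≤ a := by omega
  rcases this with h'|h'|h'|h'|h' <;> nlinarith

lemma nrm_of_isUnit (x : Dring) (h : IsUnit x) : nrm x = 1 := by
  obtain ⟨u, rfl⟩ := h
  have h1 : nrm (u : Dring) * nrm (↑u⁻¹ : Dring) = 1 := by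
    rw [← nrm_mul, u.mul_inv]
    simp [nrm, map_one]
  have h2 := nrm_nonneg (u : Dring)
  exact Int.eq_one_of_mul_eq_one_right h2 h1

lemma irred_of_nrm (x : Dring) (h : nrm x = 4 ∨ nrm x = 8) : Irreducible x := by
  constructor
  · intro hu
    have := nrm_of_isUnit x hu
    omega
  · intro a b hab
    have h1 : nrm a * nrm b = nrm x := by rw [← nrm_mul, ← hab]
    have h2 := nrm_nonneg a
    have h3 := nrm_nonneg b
    have h4 := nrm_ne_two a
    have h5 := nrm_ne_two b
    have hone : nrm a = 1 ∨ nrm b = 1 := by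
      have hb0 : nrm b ≠ 0 := by intro h0; rw [h0, mul_zero] at h1; omega
      have ha8 : nrm a ≤ nrm a * nrm b := le_mul_of_one_le_right h2 (by omega)
      have ha8' : nrm a ≤ 8 := by omega
      interval_cases h' : nrm a <;> omega
    rcases hone with h' | h'
    · exact Or.inl (isUnit_of_nrm_eq_one a h')
    · exact Or.inr (isUnit_of_nrm_eq_one b h')

lemma alpha_sq : Dalpha ^ 2 = Dalpha - 6 := by
  have h : (fpoly : ℤ[X]).eval₂ (AdjoinRoot.of fpoly) Dalpha = 0 := AdjoinRoot.eval₂_root fpoly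
  simp only [fpoly, eval₂_add, eval₂_sub, eval₂_pow, eval₂_X, eval₂_C] at h
  have h6 : (AdjoinRoot.of fpoly) 6 = (6 : Dring) := by simp [map_ofNat]
  rw [h6] at h
  linear_combination h

lemma nrm_two : nrm (2 : Dring) = 4 := by
  have h : (2 : Dring) = ((2 : ℤ) : Dring) + ((0:ℤ) : Dring) * Dalpha := by push_cast; ring
  rw [h, nrm_rep]; norm_num

lemma nrm_1a : nrm (1 + Dalpha) = 8 := by
  have h : (1 + Dalpha : Dring) = ((1 : ℤ) : Dring) + ((1:ℤ) : Dring) * Dalpha := by push_cast; ring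
  rw [h, nrm_rep]; norm_num

lemma nrm_2a : nrm (2 - Dalpha) = 8 := by
  have h : (2 - Dalpha : Dring) = ((2 : ℤ) : Dring) + ((-1:ℤ) : Dring) * Dalpha := by push_cast; ring
  rw [h, nrm_rep]; norm_num

end Dstuff



/-- In `D = ℤ[(1+√-23)/2]` we have `8 = 2·2·2 = ((3+√-23)/2)·((3-√-23)/2)`, where
`(3+√-23)/2 = 1 + α` and its Galois conjugate `(3-√-23)/2 = 2 - α`; all four factors
are atoms, so `8` has factorizations into atoms of lengths 3 and 2. -/
theorem stmt_3 :
    (8 : Dring) = 2 * 2 * 2 ∧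
    (8 : Dring) = (1 + Dalpha) * (2 - Dalpha) ∧
    Irreducible (2 : Dring) ∧
    Irreducible (1 + Dalpha) ∧
    Irreducible (2 - Dalpha) := by
  refine ⟨by norm_num, ?_, ?_, ?_, ?_⟩
  · have h := Dstuff.alpha_sq
    linear_combination h
  · exact Dstuff.irred_of_nrm _ (Or.inl Dstuff.nrm_two)
  · exact Dstuff.irred_of_nrm _ (Or.inr Dstuff.nrm_1a)
  · exact Dstuff.irred_of_nrm _ (Or.inr Dstuff.nrm_2a)
end

section
/- Let φ: H → D be a divisor homomorphism of commutative cancellative monoids into a free abelian (commutative, reduced) monoid D with basis P. Let G₀ = {[p] : p ∈ P} ⊆ Cl(φ). Then the induced map θ: H → B(G₀), sending a to the multiset of classes of the basis elements occurring in φ(a) (with multiplicity), is a transfer homomorphism. -/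
/- We model the free abelian monoid `D = ℕ₀^(P)` with basis `P` as `Multiset P`
(written additively, wrapped in `Multiplicative` to match the multiplicative monoid `H`),
and its group of fractions `Q(D)` as the free abelian group `P →₀ ℤ`. -/

/-- The canonical embedding of the free commutative monoid `Multiset P` into its group
of fractions, the free abelian group `P →₀ ℤ`. -/
noncomputable def freeEmb {P : Type*} (S : Multiset P) : P →₀ ℤ :=
  (S.map fun p => Finsupp.single p (1 : ℤ)).sum

/-- The subgroup `Q(im φ)` of `Q(D) = P →₀ ℤ` generated by the image of `φ`. -/
noncomputable def imSubgroup {P H : Type*} [CancelCommMonoid H]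
    (φ : H →* Multiplicative (Multiset P)) : AddSubgroup (P →₀ ℤ) :=
  AddSubgroup.closure (Set.range fun a : H => freeEmb (Multiplicative.toAdd (φ a)))

/-- The class group `Cl(φ) = Q(D) ⧸ Q(im φ)`. -/
noncomputable def ClassGrp {P H : Type*} [CancelCommMonoid H]
    (φ : H →* Multiplicative (Multiset P)) : Type _ :=
  (P →₀ ℤ) ⧸ imSubgroup φ

noncomputable instance {P H : Type*} [CancelCommMonoid H]
    (φ : H →* Multiplicative (Multiset P)) : AddCommGroup (ClassGrp φ) :=
  QuotientAddGroup.Quotient.addCommGroup _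

/-- The class `[d] ∈ Cl(φ)` of a divisor `d ∈ Q(D)`. -/
noncomputable def divClass {P H : Type*} [CancelCommMonoid H]
    (φ : H →* Multiplicative (Multiset P)) (d : P →₀ ℤ) : ClassGrp φ :=
  QuotientAddGroup.mk d

/-! A divisor `A ∈ D` has class `0` in `Cl(φ)` exactly when it lies in the image of `φ`:
class `0` means `A ∈ Q(im φ)`, i.e. `A + φ(y) = φ(x)` for some `x, y ∈ H`; then `φ(y) ∣ φ(x)`,
so `x = y b` because `φ` is a divisor homomorphism, and cancellation in `D` gives `φ(b) = A`.
The sum of the classes of the primes of a divisor is the class of the divisor, so a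
sequence over `G₀` is zero-sum iff its lifts to `D` are values of `φ`. This gives (T1), and
(T2) follows by lifting `θ(a) = S₁ S₂` to a factorization `φ(a) = A₁ A₂`, writing
`A₁ = φ(b₁)`, and dividing. -/

theorem Multiset.exists_map_eq_of_forall_mem_range {α β : Type*} {f : α → β}
    {S : Multiset β} (h : ∀ g ∈ S, g ∈ Set.range f) : ∃ T : Multiset α, T.map f = S := by
  lift S to Multiset (Set.range f) using h
  obtain ⟨T, rfl⟩ := Multiset.map_surjective_of_surjective Set.rangeFactorization_surjective S
  exact ⟨T, by rw [Multiset.map_map]; rfl⟩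

theorem Multiset.exists_eq_add_of_map_eq_add {α β : Type*} (f : α → β) {A : Multiset α}
    {S₁ S₂ : Multiset β} (h : A.map f = S₁ + S₂) :
    ∃ A₁ A₂, A = A₁ + A₂ ∧ A₁.map f = S₁ ∧ A₂.map f = S₂ := by
  induction S₁ using Multiset.induction generalizing A with
  | empty => exact ⟨0, A, by simp, rfl, by simpa using h⟩
  | cons g S₁ ih =>
    have hg : g ∈ A.map f := h ▸ Multiset.mem_add.2 (.inl (Multiset.mem_cons_self g S₁))
    obtain ⟨p, hp, rfl⟩ := Multiset.mem_map.1 hg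
    obtain ⟨A, rfl⟩ := Multiset.exists_cons_of_mem hp
    rw [Multiset.map_cons, Multiset.cons_add, Multiset.cons_inj_right] at h
    obtain ⟨A₁, A₂, rfl, rfl, rfl⟩ := ih h
    exact ⟨p ::ₘ A₁, A₂, (Multiset.cons_add _ _ _).symm, Multiset.map_cons _ _ _, rfl⟩

theorem freeEmb_add {P : Type*} (S T : Multiset P) :
    freeEmb (S + T) = freeEmb S + freeEmb T := by
  simp [freeEmb]

theorem freeEmb_apply {P : Type*} [DecidableEq P] (S : Multiset P) (q : P) :
    freeEmb S q = S.count q := by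
  induction S using Multiset.induction with
  | empty => rfl
  | cons p S ih =>
    simp_all [freeEmb, Finsupp.single_apply, Multiset.count_cons, add_comm, eq_comm]

theorem freeEmb_injective {P : Type*} : Function.Injective (freeEmb (P := P)) := by
  classical
  intro S T h
  ext q
  simpa [freeEmb_apply] using DFunLike.congr_fun h q

section ClassGroup

variable {P H : Type*} [CancelCommMonoid H] (φ : H →* Multiplicative (Multiset P))

theorem sum_map_divClass_single (S : Multiset P) :
    (S.map fun p => divClass φ (Finsupp.single p 1)).sum = divClass φ (freeEmb S) := by
  rw [divClass, freeEmb, ← QuotientAddGroup.mk'_apply, map_multiset_sum, Multiset.map_map]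
  rfl

theorem divClass_freeEmb_toAdd (a : H) :
    divClass φ (freeEmb (Multiplicative.toAdd (φ a))) = 0 :=
  (QuotientAddGroup.eq_zero_iff _).2 (AddSubgroup.subset_closure ⟨a, rfl⟩)

theorem exists_add_eq_of_mem_imSubgroup {d : P →₀ ℤ} (hd : d ∈ imSubgroup φ) :
    ∃ x y : H,
      d + freeEmb (Multiplicative.toAdd (φ y)) = freeEmb (Multiplicative.toAdd (φ x)) := by
  induction hd using AddSubgroup.closure_induction with
  | mem d hd =>
    obtain ⟨a, rfl⟩ := hd
    exact ⟨a, 1, by simp [freeEmb]⟩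
  | zero => exact ⟨1, 1, zero_add _⟩
  | add d e _ _ hd he =>
    obtain ⟨x₁, y₁, h₁⟩ := hd
    obtain ⟨x₂, y₂, h₂⟩ := he
    refine ⟨x₁ * x₂, y₁ * y₂, ?_⟩
    simp only [map_mul, toAdd_mul, freeEmb_add, ← h₁, ← h₂]
    abel
  | neg d _ hd =>
    obtain ⟨x, y, h⟩ := hd
    exact ⟨y, x, by rw [← h]; abel⟩

theorem exists_eq_mul_of_toAdd_eq_add (hdiv : ∀ a b : H, φ a ∣ φ b → a ∣ b) {x y : H}
    {A : Multiset P} (h : Multiplicative.toAdd (φ x) = Multiplicative.toAdd (φ y) + A) :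
    ∃ b, x = y * b ∧ Multiplicative.toAdd (φ b) = A := by
  obtain ⟨b, rfl⟩ := hdiv y x ⟨Multiplicative.ofAdd A, h⟩
  rw [map_mul, toAdd_mul] at h
  exact ⟨b, rfl, add_left_cancel h⟩

theorem exists_toAdd_eq_of_divClass_freeEmb_eq_zero (hdiv : ∀ a b : H, φ a ∣ φ b → a ∣ b)
    {A : Multiset P} (hA : divClass φ (freeEmb A) = 0) :
    ∃ b, Multiplicative.toAdd (φ b) = A := by
  obtain ⟨x, y, hxy⟩ := exists_add_eq_of_mem_imSubgroup φ ((QuotientAddGroup.eq_zero_iff _).1 hA)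
  have h : Multiplicative.toAdd (φ x) = Multiplicative.toAdd (φ y) + A :=
    freeEmb_injective (by rw [freeEmb_add, ← hxy, add_comm])
  obtain ⟨b, -, hb⟩ := exists_eq_mul_of_toAdd_eq_add φ hdiv h
  exact ⟨b, hb⟩

end ClassGroup

/-- If `φ : H → D = ℕ₀^(P)` is a divisor homomorphism of a commutative cancellative
monoid into a free abelian monoid with basis `P`, then the induced map
`θ : H → B(G₀)`, sending `a` to the multiset of classes (in `Cl(φ)`) of the basis
elements (prime divisors) occurring in `φ(a)` with multiplicity, is a transfer
homomorphism onto the monoid `B(G₀)` of zero-sum sequences over the set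
`G₀ = {[p] : p ∈ P} ⊆ Cl(φ)` of classes containing prime divisors. -/
theorem stmt_6 {P H : Type*} [CancelCommMonoid H]
    (φ : H →* Multiplicative (Multiset P))
    (hdiv : ∀ a b : H, φ a ∣ φ b → a ∣ b)
    (G₀ : Set (ClassGrp φ))
    (hG₀ : G₀ = Set.range fun p : P => divClass φ (Finsupp.single p 1))
    (θ : H → Multiset (ClassGrp φ))
    (hθ : ∀ a : H, θ a = (Multiplicative.toAdd (φ a)).map
      fun p => divClass φ (Finsupp.single p 1)) :
    -- `θ` is a monoid homomorphism into the monoid of zero-sum sequences over `G₀` …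
    (∀ a b : H, θ (a * b) = θ a + θ b) ∧
    (∀ a : H, (∀ g ∈ θ a, g ∈ G₀) ∧ (θ a).sum = 0) ∧
    -- (T1) `θ` is surjective onto `B(G₀)`, and `θ a` trivial forces `a` invertible
    (∀ S : Multiset (ClassGrp φ), (∀ g ∈ S, g ∈ G₀) → S.sum = 0 → ∃ a : H, θ a = S) ∧
    (∀ a : H, θ a = 0 → IsUnit a) ∧
    -- (T2) factorizations of `θ a` in `B(G₀)` lift to factorizations of `a`
    (∀ (a : H) (S₁ S₂ : Multiset (ClassGrp φ)), θ a = S₁ + S₂ →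
      ((∀ g ∈ S₁, g ∈ G₀) ∧ S₁.sum = 0) → ((∀ g ∈ S₂, g ∈ G₀) ∧ S₂.sum = 0) →
      ∃ b₁ b₂ : H, a = b₁ * b₂ ∧ θ b₁ = S₁ ∧ θ b₂ = S₂) := by
  obtain rfl : θ = fun a => (Multiplicative.toAdd (φ a)).map
      fun p => divClass φ (Finsupp.single p 1) := funext hθ
  subst hG₀
  refine ⟨fun a b => by simp, fun a => ⟨?_, ?_⟩, ?_, ?_, ?_⟩
  · intro g hg
    obtain ⟨p, -, rfl⟩ := Multiset.mem_map.1 hg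
    exact ⟨p, rfl⟩
  · rw [sum_map_divClass_single]
    exact divClass_freeEmb_toAdd φ a
  · intro S hS hsum
    obtain ⟨A, rfl⟩ := Multiset.exists_map_eq_of_forall_mem_range hS
    obtain ⟨b, rfl⟩ := exists_toAdd_eq_of_divClass_freeEmb_eq_zero φ hdiv
      (by rwa [← sum_map_divClass_single])
    exact ⟨b, rfl⟩
  · intro a ha
    have hφa : φ a = 1 := Multiplicative.toAdd.injective (Multiset.map_eq_zero.1 ha)
    exact isUnit_of_dvd_one (hdiv a 1 (by rw [hφa, map_one]))
  · rintro a S₁ S₂ hθa ⟨-, hS₁⟩ -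
    obtain ⟨A₁, A₂, hA, rfl, rfl⟩ := Multiset.exists_eq_add_of_map_eq_add _ hθa
    obtain ⟨b₁, rfl⟩ := exists_toAdd_eq_of_divClass_freeEmb_eq_zero φ hdiv
      (by rwa [← sum_map_divClass_single])
    obtain ⟨b₂, rfl, rfl⟩ := exists_eq_mul_of_toAdd_eq_add φ hdiv hA
    exact ⟨b₁, b₂, rfl, rfl, rfl⟩
end

section
/- Let G be a finite abelian group. The monoid B(G) of zero-sum sequences over G is half-factorial (every element has all factorizations into atoms of the same length) if and only if |G| ≤ 2. -/
/-!
If `|G| ≤ 2`, every atom is the one-term sequence `0` or `g g` with `g` the nonzero element, so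
twice the length of any factorization of `S` equals `|S| + v₀(S)`. If `|G| ≥ 3`, either some `g`
has order `n ≥ 3`, and `gⁿ (-g)ⁿ = (g (-g))ⁿ` has factorizations of lengths `2` and `n`, or `G`
has exponent `2` and contains distinct nonzero `a, b`; then with `c = a + b`,
`(a a)(b b)(c c) = (a b c)(a b c)` has factorizations of lengths `3` and `2`.
-/

/-- A minimal zero-sum sequence over an abelian group `G` (an atom of `B(G)`). -/
def IsMinimalZeroSum {G : Type*} [AddCommGroup G] (S : Multiset G) : Prop :=
  S ≠ 0 ∧ S.sum = 0 ∧ ∀ T ≤ S, T ≠ 0 → T ≠ S → T.sum ≠ 0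

open Multiset

section

variable {G : Type*} [AddCommGroup G]

variable (G) in
def HalfFactorial : Prop :=
  ∀ S : Multiset G, S.sum = 0 → S ≠ 0 →
    ∀ l₁ l₂ : List (Multiset G),
      (∀ A ∈ l₁, IsMinimalZeroSum A) → (∀ A ∈ l₂, IsMinimalZeroSum A) →
      l₁.sum = S → l₂.sum = S → l₁.length = l₂.length

/-- A proper zero-sum subsequence of a sequence of length `≤ 3` would leave a zero-sum
complement, and one of the two would be a single element `0`. -/
theorem isMinimalZeroSum_of_card_le_three {S : Multiset G} (hS : S ≠ 0) (hsum : S.sum = 0)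
    (h0 : (0 : G) ∉ S) (hcard : card S ≤ 3) : IsMinimalZeroSum S := by
  refine ⟨hS, hsum, fun T hTS hT0 hTne hTsum => ?_⟩
  obtain ⟨U, rfl⟩ := Multiset.le_iff_exists_add.mp hTS
  have hU0 : U ≠ 0 := by rintro rfl; exact hTne (add_zero T).symm
  have hUsum : U.sum = 0 := by simpa [hTsum] using hsum
  have no_singleton : ∀ V ≤ T + U, V.sum = 0 → card V ≠ 1 := by
    intro V hV hVsum hV1
    obtain ⟨x, rfl⟩ := card_eq_one.mp hV1
    rw [sum_singleton] at hVsum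
    exact h0 (hVsum ▸ singleton_le.mp hV)
  have hT := card_pos.mpr hT0
  have hU := card_pos.mpr hU0
  rw [card_add] at hcard
  rcases (by omega : card T = 1 ∨ card U = 1) with h | h
  · exact no_singleton T (le_add_right T U) hTsum h
  · exact no_singleton U (le_add_left U T) hUsum h

theorem isMinimalZeroSum_replicate_iff {g : G} {n : ℕ} :
    IsMinimalZeroSum (replicate n g) ↔ n ≠ 0 ∧ n = addOrderOf g := by
  constructor
  · rintro ⟨hne, hsum, hmin⟩
    have hn : n ≠ 0 := by rintro rfl; exact hne (replicate_zero g)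
    have hdvd : addOrderOf g ∣ n :=
      addOrderOf_dvd_of_nsmul_eq_zero (by rwa [sum_replicate] at hsum)
    have hord : addOrderOf g ≠ 0 := by rintro h; rw [h, zero_dvd_iff] at hdvd; exact hn hdvd
    refine ⟨hn, of_not_not fun hne' => hmin (replicate (addOrderOf g) g) ?_ ?_ ?_ ?_⟩
    · exact (replicate_le_replicate g).mpr (Nat.le_of_dvd (Nat.pos_of_ne_zero hn) hdvd)
    · exact fun h => hord (by simpa using congrArg card h)
    · exact fun h => hne' ((replicate_left_injective g) h).symm
    · rw [sum_replicate, addOrderOf_nsmul_eq_zero]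
  · rintro ⟨hn, rfl⟩
    refine ⟨fun h => hn (by simpa using congrArg card h),
      by rw [sum_replicate, addOrderOf_nsmul_eq_zero], ?_⟩
    rintro T hT hT0 hTne hTsum
    obtain ⟨k, hk, rfl⟩ := le_replicate_iff.mp hT
    rw [sum_replicate] at hTsum
    have hk0 : k ≠ 0 := by rintro rfl; exact hT0 (replicate_zero g)
    have hdvd := addOrderOf_dvd_of_nsmul_eq_zero hTsum
    exact hTne (by rw [le_antisymm hk (Nat.le_of_dvd (Nat.pos_of_ne_zero hk0) hdvd)])

theorem IsMinimalZeroSum.eq_singleton_zero {A : Multiset G} (hA : IsMinimalZeroSum A)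
    (h0 : (0 : G) ∈ A) : A = {0} :=
  of_not_not fun hne => hA.2.2 {0} (singleton_le.mpr h0) (singleton_ne_zero 0) (Ne.symm hne)
    (sum_singleton 0)

theorem eq_nil_of_forall_isMinimalZeroSum {l : List (Multiset G)}
    (hl : ∀ A ∈ l, IsMinimalZeroSum A) (hsum : l.sum = 0) : l = [] :=
  List.eq_nil_iff_forall_not_mem.mpr fun A hA => (hl A hA).1 (List.sum_eq_zero_iff.mp hsum A hA)

theorem not_halfFactorial_of_length_ne {l₁ l₂ : List (Multiset G)}
    (h₁ : ∀ A ∈ l₁, IsMinimalZeroSum A) (h₂ : ∀ A ∈ l₂, IsMinimalZeroSum A)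
    (hsum : l₁.sum = l₂.sum) (hlen : l₁.length ≠ l₂.length) : ¬ HalfFactorial G := by
  intro H
  have hzero : l₁.sum.sum = 0 := by
    rw [show l₁.sum.sum = (l₁.map sum).sum from map_list_sum sumAddMonoidHom l₁]
    exact List.sum_eq_zero fun x hx => by
      obtain ⟨A, hA, rfl⟩ := List.mem_map.mp hx
      exact (h₁ A hA).2.1
  have hne : l₁.sum ≠ 0 := by
    intro h0
    rw [eq_nil_of_forall_isMinimalZeroSum h₁ h0,
      eq_nil_of_forall_isMinimalZeroSum h₂ (hsum ▸ h0)] at hlen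
    exact hlen rfl
  exact hlen (H _ hzero hne l₁ l₂ h₁ h₂ rfl hsum.symm)

theorem not_halfFactorial_of_two_lt_addOrderOf {g : G} (hg : 2 < addOrderOf g) :
    ¬ HalfFactorial G := by
  have hg0 : g ≠ 0 := by rintro rfl; simp at hg
  have hpair : IsMinimalZeroSum ({g, -g} : Multiset G) :=
    isMinimalZeroSum_of_card_le_three (by simp) (by simp) (by simp [hg0, Ne.symm hg0]) (by simp)
  refine not_halfFactorial_of_length_ne
    (l₁ := [replicate (addOrderOf g) g, replicate (addOrderOf g) (-g)])
    (l₂ := List.replicate (addOrderOf g) {g, -g}) ?_ ?_ ?_ ?_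
  · simp only [List.mem_cons, List.not_mem_nil, or_false, forall_eq_or_imp, forall_eq,
      isMinimalZeroSum_replicate_iff, addOrderOf_neg, and_true]
    exact ⟨by omega, by omega⟩
  · exact fun A hA => List.eq_of_mem_replicate hA ▸ hpair
  · simp [List.sum_replicate, ← singleton_add, nsmul_singleton]
  · simp only [List.length_cons, List.length_nil, List.length_replicate]
    omega

theorem not_halfFactorial_of_add_self_eq_zero (hG : ∀ x : G, x + x = 0) {a b : G} (ha : a ≠ 0)
    (hb : b ≠ 0) (hab : a ≠ b) : ¬ HalfFactorial G := by
  have hc : a + b ≠ 0 := fun h => hab (by rw [← add_right_cancel_iff (a := b), h, hG])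
  have hsum : a + (b + (a + b)) = 0 := by
    rw [show a + (b + (a + b)) = (a + a) + (b + b) by abel, hG, hG, add_zero]
  have hdouble : ∀ x : G, x ≠ 0 → IsMinimalZeroSum ({x, x} : Multiset G) := fun x hx =>
    isMinimalZeroSum_of_card_le_three (by simp) (by simp [hG]) (by simp [hx.symm]) (by simp)
  have htriple : IsMinimalZeroSum ({a, b, a + b} : Multiset G) :=
    isMinimalZeroSum_of_card_le_three (by simp) (by simp [hsum])
      (by simp [ha.symm, hb.symm, hc.symm]) (by simp)
  refine not_halfFactorial_of_length_ne (l₁ := [{a, a}, {b, b}, {a + b, a + b}])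
    (l₂ := [{a, b, a + b}, {a, b, a + b}]) ?_ ?_ ?_ (by simp)
  · simp only [List.mem_cons, List.not_mem_nil, or_false, forall_eq_or_imp, forall_eq]
    exact ⟨hdouble a ha, hdouble b hb, hdouble _ hc⟩
  · simp only [List.mem_cons, List.not_mem_nil, or_false, forall_eq_or_imp, forall_eq]
    exact ⟨htriple, htriple⟩
  · simp only [List.sum_cons, List.sum_nil, add_zero, insert_eq_cons, ← singleton_add]
    abel

section Finite

variable [Fintype G]

theorem not_halfFactorial_of_two_lt_card (hG : 2 < Fintype.card G) : ¬ HalfFactorial G := by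
  classical
  by_cases hexp : ∀ x : G, x + x = 0
  · have hcard : 1 < (Finset.univ.erase (0 : G)).card := by
      rw [Finset.card_erase_of_mem (Finset.mem_univ 0), Finset.card_univ]
      omega
    obtain ⟨a, ha, b, hb, hab⟩ := Finset.one_lt_card.mp hcard
    exact not_halfFactorial_of_add_self_eq_zero hexp (Finset.ne_of_mem_erase ha)
      (Finset.ne_of_mem_erase hb) hab
  · obtain ⟨g, hg⟩ := not_forall.mp hexp
    have h1 : addOrderOf g ≠ 1 := fun h => hg (by simp [AddMonoid.addOrderOf_eq_one_iff.mp h])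
    have h2 : addOrderOf g ≠ 2 := fun h => hg (by rw [← two_nsmul, ← h, addOrderOf_nsmul_eq_zero])
    have h0 := addOrderOf_pos g
    exact not_halfFactorial_of_two_lt_addOrderOf (by omega : 2 < addOrderOf g)

theorem eq_of_ne_zero_of_card_le_two (hG : Fintype.card G ≤ 2) {x y : G} (hx : x ≠ 0)
    (hy : y ≠ 0) : x = y := by
  classical
  have hcard : (Finset.univ.erase (0 : G)).card ≤ 1 := by
    rw [Finset.card_erase_of_mem (Finset.mem_univ 0), Finset.card_univ]
    omega
  exact Finset.card_le_one.mp hcard x (by simp [hx]) y (by simp [hy])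

theorem IsMinimalZeroSum.card_add_count_zero_of_card_le_two [DecidableEq G]
    (hG : Fintype.card G ≤ 2) {A : Multiset G} (hA : IsMinimalZeroSum A) :
    card A + A.count 0 = 2 := by
  by_cases h0 : (0 : G) ∈ A
  · simp [hA.eq_singleton_zero h0]
  obtain ⟨g, hg⟩ := exists_mem_of_ne_zero hA.1
  have hg0 : g ≠ 0 := ne_of_mem_of_not_mem hg h0
  have hrep : A = replicate (card A) g := eq_replicate_card.mpr fun x hx =>
    eq_of_ne_zero_of_card_le_two hG (ne_of_mem_of_not_mem hx h0) hg0
  have hord : addOrderOf g = 2 := by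
    have := addOrderOf_le_card_univ (x := g)
    have := addOrderOf_pos g
    have := mt AddMonoid.addOrderOf_eq_one_iff.mp hg0
    omega
  rw [hrep, isMinimalZeroSum_replicate_iff, hord] at hA
  rw [count_eq_zero.mpr h0]
  omega

theorem two_mul_length_eq_of_card_le_two [DecidableEq G] (hG : Fintype.card G ≤ 2)
    {l : List (Multiset G)} (hl : ∀ A ∈ l, IsMinimalZeroSum A) :
    2 * l.length = card l.sum + l.sum.count 0 := by
  induction l with
  | nil => simp
  | cons A l ih =>
    rw [List.forall_mem_cons] at hl
    have hA := hl.1.card_add_count_zero_of_card_le_two hG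
    have hl' := ih hl.2
    simp only [List.length_cons, List.sum_cons, card_add, count_add]
    omega

theorem halfFactorial_of_card_le_two (hG : Fintype.card G ≤ 2) : HalfFactorial G := by
  classical
  rintro S - - l₁ l₂ h₁ h₂ rfl hsum
  have e₁ := two_mul_length_eq_of_card_le_two hG h₁
  have e₂ := two_mul_length_eq_of_card_le_two hG h₂
  rw [hsum] at e₂
  omega

end Finite

end

/-- Carlitz: for a finite abelian group `G`, the monoid `B(G)` of zero-sum sequences over
`G` is half-factorial (any two factorizations of a nonzero zero-sum sequence into
minimal zero-sum sequences have the same number of factors) if and only if `|G| ≤ 2`. -/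
theorem stmt_9 {G : Type*} [AddCommGroup G] [Fintype G] :
    (∀ S : Multiset G, S.sum = 0 → S ≠ 0 →
      ∀ l₁ l₂ : List (Multiset G),
        (∀ A ∈ l₁, IsMinimalZeroSum A) → (∀ A ∈ l₂, IsMinimalZeroSum A) →
        l₁.sum = S → l₂.sum = S → l₁.length = l₂.length) ↔
    Fintype.card G ≤ 2 :=
  ⟨fun h => not_lt.mp fun hG => not_halfFactorial_of_two_lt_card hG h,
    halfFactorial_of_card_le_two⟩
end

section
/- Let R be a right hereditary ring, and M, M', N, N' finitely generated projective right R-modules with M' ≤ M, N' ≤ N such that M/M' and N/N' have finite length and the same composition factors with multiplicity. Then M ⊕ N' and N ⊕ M' are stably isomorphic, i.e., (M ⊕ N') ⊕ X ≅ (N ⊕ M') ⊕ X for some finitely generated projective X. -/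
universe u v

/-- The factor `q / p` of a pair of submodules (used for composition factors). -/
abbrev subFactor {R : Type u} [Ring R] {A : Type v} [AddCommGroup A] [Module R A]
    (q p : Submodule R A) : Type v :=
  ↥q ⧸ Submodule.comap q.subtype p

section Aux
variable {R : Type u} [Ring R]
open LinearMap Submodule

theorem simple_cyclic {S : Type v} [AddCommGroup S] [Module R S] (h : IsSimpleModule R S) :
    ∃ I : Submodule R R, Nonempty (S ≃ₗ[R] R ⧸ I) := by
  haveI := h
  haveI : Nontrivial S := IsSimpleModule.nontrivial R S
  obtain ⟨s, hs⟩ := exists_ne (0 : S)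
  set φ := LinearMap.toSpanSingleton R S s with hφ
  have hsp : Submodule.span R {s} = ⊤ := by
    rcases eq_bot_or_eq_top (Submodule.span R {s}) with hb | ht
    · exact absurd ((Submodule.mem_bot R).1 (hb ▸ Submodule.mem_span_singleton_self s)) hs
    · exact ht
  have hsurj : Function.Surjective φ := by
    rw [← LinearMap.range_eq_top, ← LinearMap.span_singleton_eq_range, hsp]
  exact ⟨ker φ, ⟨(φ.quotKerEquivOfSurjective hsurj).symm⟩⟩

theorem split_of_surjective {N P : Type*} [AddCommGroup N] [Module R N] [AddCommGroup P]
    [Module R P] [Module.Projective R P] (g : N →ₗ[R] P) (hg : Function.Surjective g) :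
    Nonempty (N ≃ₗ[R] ↥(ker g) × P) := by
  obtain ⟨l, hl⟩ := Module.projective_lifting_property g LinearMap.id hg
  exact ⟨((by rw [LinearMap.exact_iff, Submodule.range_subtype] :
      Function.Exact (ker g).subtype g).splitSurjectiveEquiv
    (Submodule.injective_subtype _) ⟨l, hl⟩).1⟩

theorem schanuel {P P' Q : Type*} [AddCommGroup P] [Module R P] [AddCommGroup P'] [Module R P']
    [AddCommGroup Q] [Module R Q] [Module.Projective R P] [Module.Projective R P']
    (p : P →ₗ[R] Q) (p' : P' →ₗ[R] Q) (hp : Function.Surjective p)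
    (hp' : Function.Surjective p') :
    Nonempty ((↥(ker p) × P') ≃ₗ[R] (↥(ker p') × P)) := by
  set D : P × P' →ₗ[R] Q := p ∘ₗ fst R P P' - p' ∘ₗ snd R P P' with hD
  have hmem : ∀ v : P × P', v ∈ ker D ↔ p v.1 = p' v.2 := by
    intro v; simp [hD, LinearMap.mem_ker, sub_eq_zero]
  set π : ↥(ker D) →ₗ[R] P := fst R P P' ∘ₗ (ker D).subtype with hπdef
  set π' : ↥(ker D) →ₗ[R] P' := snd R P P' ∘ₗ (ker D).subtype with hπ'def
  have hπ : Function.Surjective π := fun a => by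
    obtain ⟨b, hb⟩ := hp' (p a); exact ⟨⟨(a, b), (hmem _).2 hb.symm⟩, rfl⟩
  have hπ' : Function.Surjective π' := fun b => by
    obtain ⟨a, ha⟩ := hp (p' b); exact ⟨⟨(a, b), (hmem _).2 ha⟩, rfl⟩
  obtain ⟨e⟩ := split_of_surjective π hπ
  obtain ⟨e'⟩ := split_of_surjective π' hπ'
  have k1 : ↥(ker π) ≃ₗ[R] ↥(ker p') :=
    { toFun := fun x => ⟨(x.1.1 : P × P').2, by
        have h1 : (x.1.1 : P × P').1 = 0 := x.2
        have h2 := (hmem x.1.1).1 x.1.2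
        rw [LinearMap.mem_ker, ← h2, h1, map_zero]⟩
      map_add' := fun x y => rfl
      map_smul' := fun c x => rfl
      invFun := fun b => ⟨⟨((0 : P), (b : P')), (hmem _).2 (by
          show p 0 = p' (b : P')
          rw [LinearMap.mem_ker.1 b.2, map_zero])⟩, LinearMap.mem_ker.2 rfl⟩
      left_inv := fun x => by
        apply Subtype.ext; apply Subtype.ext
        exact Prod.ext (x.2 : (x.1.1 : P × P').1 = 0).symm rfl
      right_inv := fun b => by apply Subtype.ext; rfl }
  have k2 : ↥(ker π') ≃ₗ[R] ↥(ker p) :=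
    { toFun := fun x => ⟨(x.1.1 : P × P').1, by
        have h1 : (x.1.1 : P × P').2 = 0 := x.2
        have h2 := (hmem x.1.1).1 x.1.2
        rw [LinearMap.mem_ker, h2, h1, map_zero]⟩
      map_add' := fun x y => rfl
      map_smul' := fun c x => rfl
      invFun := fun a => ⟨⟨((a : P), (0 : P')), (hmem _).2 (by
          show p (a : P) = p' 0
          rw [LinearMap.mem_ker.1 a.2, map_zero])⟩, LinearMap.mem_ker.2 rfl⟩
      left_inv := fun x => by
        apply Subtype.ext; apply Subtype.ext
        exact Prod.ext rfl (x.2 : (x.1.1 : P × P').2 = 0).symm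
      right_inv := fun a => by apply Subtype.ext; rfl }
  exact ⟨((k2.prodCongr (LinearEquiv.refl R P'))).symm ≪≫ₗ e'.symm ≪≫ₗ e ≪≫ₗ
    (k1.prodCongr (LinearEquiv.refl R P))⟩

/-- quotient of a submodule by the kernel is the image -/
noncomputable def quotRestrict {A V : Type v} [AddCommGroup A] [Module R A] [AddCommGroup V]
    [Module R V] (φ : A →ₗ[R] V) (B : Submodule R A) :
    (↥B ⧸ comap B.subtype (ker φ)) ≃ₗ[R] ↥(map φ B) := by
  set ψ : ↥B →ₗ[R] ↥(map φ B) :=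
    φ.restrict (fun x hx => Submodule.mem_map_of_mem hx) with hψ
  have hsurj : Function.Surjective ψ := by
    rintro ⟨y, x, hx, rfl⟩
    exact ⟨⟨x, hx⟩, rfl⟩
  have hker : ker ψ = comap B.subtype (ker φ) := by
    ext x
    simp [hψ, LinearMap.mem_ker, LinearMap.restrict_apply, Subtype.ext_iff]
  exact (Submodule.quotEquivOfEq _ _ hker.symm) ≪≫ₗ ψ.quotKerEquivOfSurjective hsurj

noncomputable def subFactorCongr {V W : Type v} [AddCommGroup V] [Module R V] [AddCommGroup W]
    [Module R W] (e : V ≃ₗ[R] W) (q p : Submodule R V) :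
    subFactor q p ≃ₗ[R] subFactor (q.map (e : V →ₗ[R] W)) (p.map (e : V →ₗ[R] W)) := by
  refine Submodule.Quotient.equiv _ _ (e.submoduleMap q) ?_
  ext ⟨x, hx⟩
  simp only [Submodule.mem_map, Submodule.mem_comap, Submodule.coe_subtype]
  constructor
  · rintro ⟨⟨y, hy⟩, hyp, heq⟩
    refine ⟨y, hyp, ?_⟩
    have := congrArg Subtype.val heq
    simpa using this
  · rintro ⟨v, hv, hvx⟩
    obtain ⟨y, hy, rfl⟩ := Submodule.mem_map.1 hx
    have : v = y := e.injective (by simpa using hvx)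
    exact ⟨⟨y, hy⟩, this ▸ hv, by apply Subtype.ext; simp⟩

noncomputable def subFactorComap {V : Type v} [AddCommGroup V] [Module R V]
    {p q₂ : Submodule R V} (q₁ : Submodule R V) (h : q₂ ≤ p) :
    subFactor (comap p.subtype q₂) (comap p.subtype q₁) ≃ₗ[R] subFactor q₂ q₁ := by
  refine Submodule.Quotient.equiv _ _ (Submodule.comapSubtypeEquivOfLe h) ?_
  ext ⟨x, hx⟩
  simp only [Submodule.mem_map, Submodule.mem_comap, Submodule.coe_subtype]
  constructor
  · rintro ⟨⟨⟨y, hyp⟩, hy⟩, h1, heq⟩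
    have hxy : y = x := by
      have := congrArg Subtype.val heq
      simpa using this
    subst hxy
    simpa using h1
  · intro h1
    refine ⟨⟨⟨x, h hx⟩, by simpa using hx⟩, by simpa using h1, ?_⟩
    apply Subtype.ext
    simp

noncomputable def subFactorTop {V : Type v} [AddCommGroup V] [Module R V]
    {q : Submodule R V} (p : Submodule R V) (hq : q = ⊤) :
    subFactor q p ≃ₗ[R] V ⧸ p := by
  subst hq
  refine Submodule.Quotient.equiv _ _ (Submodule.topEquiv) ?_
  ext x
  simp only [Submodule.mem_map, Submodule.mem_comap, Submodule.coe_subtype]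
  constructor
  · rintro ⟨⟨y, hy⟩, h1, rfl⟩; simpa using h1
  · intro h1; exact ⟨⟨x, trivial⟩, h1, rfl⟩

def piSnoc {n : ℕ} (V : Fin (n + 1) → Type v) [∀ i, AddCommGroup (V i)]
    [∀ i, Module R (V i)] :
    (∀ i, V i) ≃ₗ[R] (∀ i : Fin n, V i.castSucc) × V (Fin.last n) where
  toFun f := (fun i => f i.castSucc, f (Fin.last n))
  invFun p := Fin.snoc p.1 p.2
  map_add' f g := rfl
  map_smul' c f := rfl
  left_inv f := by
    funext i
    refine Fin.lastCases ?_ ?_ i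
    · simp
    · intro j; simp
  right_inv p := by
    refine Prod.ext ?_ ?_
    · funext i; simp
    · simp

def linEquivOfSubsingleton (M N : Type v) [AddCommGroup M] [Module R M]
    [AddCommGroup N] [Module R N] [Subsingleton M] [Subsingleton N] : M ≃ₗ[R] N :=
  LinearEquiv.ofLinear 0 0 (LinearMap.ext fun x => Subsingleton.elim _ _)
    (LinearMap.ext fun x => Subsingleton.elim _ _)



theorem key (hher : ∀ (A : Type u) [AddCommGroup A] [Module R A],
      Module.Projective R A → ∀ B : Submodule R A, Module.Projective R B) :
    ∀ (n : ℕ) (A : Type u) [AddCommGroup A] [Module R A],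
      Module.Projective R A → ∀ (A' : Submodule R A)
      (f : Fin (n + 1) → Submodule R (A ⧸ A')) (I : Fin n → Submodule R R),
      Monotone f → f 0 = ⊥ → f (Fin.last n) = ⊤ →
      (∀ i : Fin n, Nonempty (subFactor (f i.succ) (f i.castSucc) ≃ₗ[R] (R ⧸ I i))) →
      Nonempty ((A × (∀ i : Fin n, ↥(I i))) ≃ₗ[R] (↥A' × (Fin n → R))) := by
  intro n
  induction n with
  | zero =>
    intro A _ _ hA A' f I hmono hf0 hfn _
    have htop : A' = ⊤ := by
      have hbt : (⊥ : Submodule R (A ⧸ A')) = ⊤ := by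
        rw [← hf0, ← hfn]; rfl
      rw [eq_top_iff]
      intro x _
      have hx : A'.mkQ x ∈ (⊤ : Submodule R (A ⧸ A')) := trivial
      rw [← hbt, Submodule.mem_bot] at hx
      exact (Submodule.Quotient.mk_eq_zero A').1 hx
    exact ⟨(Submodule.topEquiv.symm ≪≫ₗ LinearEquiv.ofEq _ _ htop.symm).prodCongr
      (linEquivOfSubsingleton _ _)⟩
  | succ n ih =>
    intro A _ _ hA A' f I hmono hf0 hfn hfac
    haveI := hA
    set p : Submodule R (A ⧸ A') := f (Fin.last n).castSucc with hpdef
    set B : Submodule R A := comap A'.mkQ p with hBdef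
    have hA'B : A' ≤ B := by
      intro x hx
      show A'.mkQ x ∈ p
      rw [show A'.mkQ x = 0 from (Submodule.Quotient.mk_eq_zero A').2 hx]
      exact zero_mem p
    have hmapB : map A'.mkQ B = p :=
      Submodule.map_comap_eq_of_surjective (Submodule.mkQ_surjective A') p
    have hsucc : f (Fin.last n).succ = ⊤ := by rw [Fin.succ_last]; exact hfn
    obtain ⟨w⟩ := hfac (Fin.last n)
    -- β : A ⧸ B ≃ R ⧸ I (last n)
    set β : (A ⧸ B) ≃ₗ[R] (R ⧸ I (Fin.last n)) :=
      (Submodule.quotientQuotientEquivQuotient A' B hA'B).symm ≪≫ₗ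
        Submodule.quotEquivOfEq _ _ hmapB ≪≫ₗ
        (subFactorTop (f (Fin.last n).castSucc) hsucc).symm ≪≫ₗ w with hβ
    set q1 : A →ₗ[R] R ⧸ I (Fin.last n) := β.toLinearMap ∘ₗ B.mkQ with hq1
    have hker1 : ker q1 = B := by rw [hq1, LinearEquiv.ker_comp, Submodule.ker_mkQ]
    have hq1surj : Function.Surjective q1 := by
      rw [hq1, LinearMap.coe_comp]
      exact β.surjective.comp (Submodule.mkQ_surjective B)
    have hker2 : ker (I (Fin.last n)).mkQ = I (Fin.last n) := Submodule.ker_mkQ _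
    obtain ⟨esch⟩ := schanuel q1 (I (Fin.last n)).mkQ hq1surj
      (Submodule.mkQ_surjective _)
    have eB : (↥B × R) ≃ₗ[R] (↥(I (Fin.last n)) × A) :=
      ((LinearEquiv.ofEq _ _ hker1.symm).prodCongr (LinearEquiv.refl R R)) ≪≫ₗ esch ≪≫ₗ
        ((LinearEquiv.ofEq _ _ hker2).prodCongr (LinearEquiv.refl R A))
    -- recursive setup
    haveI hBproj : Module.Projective R ↥B := hher A hA B
    set A'' : Submodule R ↥B := comap B.subtype A' with hA''
    have θ : (↥B ⧸ A'') ≃ₗ[R] ↥p :=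
      Submodule.quotEquivOfEq _ _ (by rw [hA'', Submodule.ker_mkQ]) ≪≫ₗ
        quotRestrict A'.mkQ B ≪≫ₗ LinearEquiv.ofEq _ _ hmapB
    set c : Fin (n + 1) → Submodule R ↥p := fun j => comap p.subtype (f j.castSucc) with hc
    set g : Fin (n + 1) → Submodule R (↥B ⧸ A'') :=
      fun j => (c j).map (θ.symm : ↥p →ₗ[R] ↥B ⧸ A'') with hg
    have hgmono : Monotone g := fun j k hjk =>
      Submodule.map_mono (Submodule.comap_mono (hmono (Fin.castSucc_le_castSucc_iff.2 hjk)))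
    have hg0 : g 0 = ⊥ := by
      rw [hg]
      simp only [hc, Fin.castSucc_zero, hf0]
      rw [show comap p.subtype ⊥ = ⊥ by simp]
      exact Submodule.map_bot _
    have hgn : g (Fin.last n) = ⊤ := by
      rw [hg]
      simp only [hc]
      rw [show comap p.subtype (f (Fin.last n).castSucc) = ⊤ from Submodule.comap_subtype_self p]
      rw [Submodule.map_top, LinearEquiv.range]
    have hfac' : ∀ i : Fin n,
        Nonempty (subFactor (g i.succ) (g i.castSucc) ≃ₗ[R] (R ⧸ I i.castSucc)) := by
      intro i
      obtain ⟨w'⟩ := hfac i.castSucc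
      have e1 := subFactorCongr (θ.symm) (c i.succ) (c i.castSucc)
      have hle : f (i.succ.castSucc : Fin (n+1+1)) ≤ p := by
        rw [hpdef]
        exact hmono (Fin.castSucc_le_castSucc_iff.2 (Fin.le_last _))
      have e2 := subFactorComap (p := p) (f (i.castSucc.castSucc)) hle
      exact ⟨e1.symm ≪≫ₗ e2 ≪≫ₗ w'⟩
    obtain ⟨eIH⟩ := ih ↥B hBproj A'' g (fun i => I i.castSucc) hgmono hg0 hgn hfac'
    have eA'' : ↥A'' ≃ₗ[R] ↥A' := Submodule.comapSubtypeEquivOfLe hA'B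
    exact ⟨((LinearEquiv.refl R A).prodCongr (piSnoc fun i => ↥(I i)))
      ≪≫ₗ (LinearEquiv.refl R A).prodCongr
          (LinearEquiv.prodComm R (∀ i : Fin n, ↥(I i.castSucc)) ↥(I (Fin.last n)))
      ≪≫ₗ (LinearEquiv.prodAssoc R A ↥(I (Fin.last n)) (∀ i : Fin n, ↥(I i.castSucc))).symm
      ≪≫ₗ ((LinearEquiv.prodComm R A ↥(I (Fin.last n))).prodCongr
          (LinearEquiv.refl R (∀ i : Fin n, ↥(I i.castSucc))))
      ≪≫ₗ (eB.symm.prodCongr (LinearEquiv.refl R (∀ i : Fin n, ↥(I i.castSucc))))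
      ≪≫ₗ LinearEquiv.prodAssoc R ↥B R (∀ i : Fin n, ↥(I i.castSucc))
      ≪≫ₗ (LinearEquiv.refl R ↥B).prodCongr
          (LinearEquiv.prodComm R R (∀ i : Fin n, ↥(I i.castSucc)))
      ≪≫ₗ (LinearEquiv.prodAssoc R ↥B (∀ i : Fin n, ↥(I i.castSucc)) R).symm
      ≪≫ₗ (eIH.prodCongr (LinearEquiv.refl R R))
      ≪≫ₗ ((eA''.prodCongr (LinearEquiv.refl R (Fin n → R))).prodCongr (LinearEquiv.refl R R))
      ≪≫ₗ LinearEquiv.prodAssoc R ↥A' (Fin n → R) R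
      ≪≫ₗ (LinearEquiv.refl R ↥A').prodCongr ((piSnoc (fun _ : Fin (n + 1) => R)).symm)⟩

end Aux


/-- Let `R` be a hereditary ring (every submodule of a projective module is projective)
and let `M`, `N` be finitely generated projective `R`-modules with submodules
`M' ≤ M`, `N' ≤ N` such that `M/M'` and `N/N'` have finite length with the same
composition factors with multiplicity (witnessed by composition series of a common
length `n` whose simple factors match up to a permutation `σ`).  Then `M ⊕ N'` and
`N ⊕ M'` are stably isomorphic: `(M ⊕ N') ⊕ Rᵏ ≅ (N ⊕ M') ⊕ Rᵏ` for some `k`. -/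
theorem stmt_12 {R : Type u} [Ring R]
    (hher : ∀ (A : Type u) [AddCommGroup A] [Module R A],
      Module.Projective R A → ∀ B : Submodule R A, Module.Projective R B)
    {M N : Type u}
    [AddCommGroup M] [Module R M] [AddCommGroup N] [Module R N]
    [Module.Finite R M] [Module.Projective R M]
    [Module.Finite R N] [Module.Projective R N]
    (M' : Submodule R M) (N' : Submodule R N)
    (n : ℕ)
    (f : Fin (n + 1) → Submodule R (M ⧸ M')) (g : Fin (n + 1) → Submodule R (N ⧸ N'))
    (hfmono : Monotone f) (hgmono : Monotone g)
    (hf0 : f 0 = ⊥) (hfn : f (Fin.last n) = ⊤)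
    (hg0 : g 0 = ⊥) (hgn : g (Fin.last n) = ⊤)
    (hfsimple : ∀ i : Fin n, IsSimpleModule R (subFactor (f i.succ) (f i.castSucc)))
    (hgsimple : ∀ i : Fin n, IsSimpleModule R (subFactor (g i.succ) (g i.castSucc)))
    (σ : Equiv.Perm (Fin n))
    (hiso : ∀ i : Fin n, Nonempty
      (subFactor (f i.succ) (f i.castSucc) ≃ₗ[R]
        subFactor (g (σ i).succ) (g (σ i).castSucc))) :
    ∃ k : ℕ, Nonempty
      (((M × N') × (Fin k → R)) ≃ₗ[R] ((N × M') × (Fin k → R))) := by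
  have hcyc : ∀ i : Fin n, ∃ I : Submodule R R,
      Nonempty (subFactor (f i.succ) (f i.castSucc) ≃ₗ[R] R ⧸ I) :=
    fun i => simple_cyclic (hfsimple i)
  choose I hI using hcyc
  obtain ⟨eM⟩ := key hher n M inferInstance M' f I hfmono hf0 hfn hI
  have hJ : ∀ j : Fin n,
      Nonempty (subFactor (g j.succ) (g j.castSucc) ≃ₗ[R] R ⧸ I (σ.symm j)) := by
    intro j
    obtain ⟨u⟩ := hiso (σ.symm j)
    obtain ⟨v⟩ := hI (σ.symm j)
    have hj : σ (σ.symm j) = j := σ.apply_symm_apply j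
    rw [hj] at u
    exact ⟨u.symm ≪≫ₗ v⟩
  obtain ⟨eN⟩ := key hher n N inferInstance N' g (fun j => I (σ.symm j)) hgmono hg0 hgn hJ
  have eπ : (∀ j : Fin n, ↥(I (σ.symm j))) ≃ₗ[R] (∀ i : Fin n, ↥(I i)) :=
    LinearEquiv.piCongrLeft R (fun i => ↥(I i)) σ.symm
  refine ⟨n, ⟨?_⟩⟩
  exact LinearEquiv.prodAssoc R M ↥N' (Fin n → R)
    ≪≫ₗ (LinearEquiv.refl R M).prodCongr eN.symm
    ≪≫ₗ (LinearEquiv.refl R M).prodCongr ((LinearEquiv.refl R N).prodCongr eπ)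
    ≪≫ₗ (LinearEquiv.prodAssoc R M N (∀ i : Fin n, ↥(I i))).symm
    ≪≫ₗ ((LinearEquiv.prodComm R M N).prodCongr (LinearEquiv.refl R (∀ i : Fin n, ↥(I i))))
    ≪≫ₗ LinearEquiv.prodAssoc R N M (∀ i : Fin n, ↥(I i))
    ≪≫ₗ (LinearEquiv.refl R N).prodCongr eM
    ≪≫ₗ (LinearEquiv.prodAssoc R N ↥M' (Fin n → R)).symm
end

section
/- In the matrix ring T₁ = [[Z, pZ],[Z, Z]] (2×2 matrices with integer entries whose top-right entry is divisible by the prime p), the subset M = [[pZ, pZ],[Z, Z]] is a two-sided ideal satisfying M² = M (M is idempotent). -/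
/-!
The top row of `B * A` is a combination of the top row of `B`, so `M` is a right ideal of the
full matrix ring; the top row of `A * B` is `A₀₀ • B₀ + A₀₁ • B₁`, which lies in `pℤ` once
`p ∣ A₀₁`, so `M` is a left ideal of `T₁`. For `M² = M`, every element of `M` splits as
`[[pa, pb], [c, d]] = [[0, p], [0, 0]] * [[0, 0], [a, b]] + [[0, 0], [0, 1]] * [[0, 0], [c, d]]`,
a sum of two products of elements of `M`.
-/

namespace Matrix

variable {R : Type*} [CommRing R] (p : R)

def firstRowDvd : AddSubgroup (Matrix (Fin 2) (Fin 2) R) where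
  carrier := {A | p ∣ A 0 0 ∧ p ∣ A 0 1}
  zero_mem' := ⟨dvd_zero p, dvd_zero p⟩
  add_mem' := fun ⟨ha₀, ha₁⟩ ⟨hb₀, hb₁⟩ => ⟨dvd_add ha₀ hb₀, dvd_add ha₁ hb₁⟩
  neg_mem' := fun ⟨ha₀, ha₁⟩ => ⟨(dvd_neg).2 ha₀, (dvd_neg).2 ha₁⟩

variable {p}

theorem mem_firstRowDvd {A : Matrix (Fin 2) (Fin 2) R} :
    A ∈ firstRowDvd p ↔ p ∣ A 0 0 ∧ p ∣ A 0 1 :=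
  Iff.rfl

theorem mul_mem_firstRowDvd_of_mem_left {A B : Matrix (Fin 2) (Fin 2) R}
    (hB : B ∈ firstRowDvd p) : B * A ∈ firstRowDvd p := by
  obtain ⟨hB₀, hB₁⟩ := hB
  constructor <;> simp only [mul_apply, Fin.sum_univ_two] <;>
    exact dvd_add (dvd_mul_of_dvd_left hB₀ _) (dvd_mul_of_dvd_left hB₁ _)

theorem mul_mem_firstRowDvd_of_dvd {A B : Matrix (Fin 2) (Fin 2) R} (hA : p ∣ A 0 1)
    (hB : B ∈ firstRowDvd p) : A * B ∈ firstRowDvd p := by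
  obtain ⟨hB₀, hB₁⟩ := hB
  constructor <;> simp only [mul_apply, Fin.sum_univ_two]
  · exact dvd_add (dvd_mul_of_dvd_right hB₀ _) (dvd_mul_of_dvd_left hA _)
  · exact dvd_add (dvd_mul_of_dvd_right hB₁ _) (dvd_mul_of_dvd_left hA _)

theorem eq_mul_add_mul_of_firstRow_eq {C : Matrix (Fin 2) (Fin 2) R} {a b : R}
    (ha : C 0 0 = p * a) (hb : C 0 1 = p * b) :
    C = !![0, p; 0, 0] * !![0, 0; a, b] + !![0, 0; 0, 1] * !![0, 0; C 1 0, C 1 1] := by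
  ext i j
  fin_cases i <;> fin_cases j <;> simp [ha, hb]

theorem mem_firstRowDvd_iff_exists_sum_mul {C : Matrix (Fin 2) (Fin 2) R} :
    C ∈ firstRowDvd p ↔ ∃ (n : ℕ) (f g : Fin n → Matrix (Fin 2) (Fin 2) R),
      (∀ i, f i ∈ firstRowDvd p) ∧ (∀ i, g i ∈ firstRowDvd p) ∧ C = ∑ i, f i * g i := by
  constructor
  · rintro ⟨⟨a, ha⟩, ⟨b, hb⟩⟩
    refine ⟨2, ![!![0, p; 0, 0], !![0, 0; 0, 1]], ![!![0, 0; a, b], !![0, 0; C 1 0, C 1 1]],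
      ?_, ?_, ?_⟩
    · intro i; fin_cases i <;> simp [mem_firstRowDvd]
    · intro i; fin_cases i <;> simp [mem_firstRowDvd]
    · simpa [Fin.sum_univ_two] using eq_mul_add_mul_of_firstRow_eq ha hb
  · rintro ⟨n, f, g, hf, -, rfl⟩
    exact AddSubgroup.sum_mem _ fun i _ => mul_mem_firstRowDvd_of_mem_left (hf i)

end Matrix

open Matrix in
theorem stmt_15_general (p : ℕ) :
    -- `T₁` and `M` as subsets of the ring of 2×2 integer matrices:
    ∀ T M : Set (Matrix (Fin 2) (Fin 2) ℤ),
      T = {A | (p : ℤ) ∣ A 0 1} →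
      M = {A | (p : ℤ) ∣ A 0 0 ∧ (p : ℤ) ∣ A 0 1} →
      -- `M` is a two-sided ideal of `T₁`:
      (M ⊆ T ∧ (0 : Matrix (Fin 2) (Fin 2) ℤ) ∈ M ∧
        (∀ A ∈ M, ∀ B ∈ M, A + B ∈ M) ∧ (∀ A ∈ M, -A ∈ M) ∧
        (∀ A ∈ T, ∀ B ∈ M, A * B ∈ M ∧ B * A ∈ M)) ∧
      -- `M` is idempotent: `M² = M`
      {C | ∃ (n : ℕ) (f g : Fin n → Matrix (Fin 2) (Fin 2) ℤ),
          (∀ i, f i ∈ M) ∧ (∀ i, g i ∈ M) ∧ C = ∑ i, f i * g i} = M := by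
  rintro T M rfl rfl
  refine ⟨⟨fun A hA => hA.2, zero_mem (firstRowDvd (p : ℤ)),
    fun A hA B hB => (firstRowDvd (p : ℤ)).add_mem hA hB,
    fun A hA => (firstRowDvd (p : ℤ)).neg_mem hA, fun A hA B hB =>
      ⟨mul_mem_firstRowDvd_of_dvd hA hB, mul_mem_firstRowDvd_of_mem_left hB⟩⟩, ?_⟩
  ext C
  exact mem_firstRowDvd_iff_exists_sum_mul.symm

open Matrix in
/-- In the HNP ring `T₁ = [[ℤ, pℤ], [ℤ, ℤ]]` (2×2 integer matrices whose top-right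
entry is divisible by the prime `p`), the subset `M = [[pℤ, pℤ], [ℤ, ℤ]]` is a
two-sided ideal with `M² = M` (where `M²` is the usual ideal product, the additive
span of pairwise products). -/
theorem stmt_15 (p : ℕ) (hp : p.Prime) :
    -- `T₁` and `M` as subsets of the ring of 2×2 integer matrices:
    ∀ T M : Set (Matrix (Fin 2) (Fin 2) ℤ),
      T = {A | (p : ℤ) ∣ A 0 1} →
      M = {A | (p : ℤ) ∣ A 0 0 ∧ (p : ℤ) ∣ A 0 1} →
      -- `M` is a two-sided ideal of `T₁`:
      (M ⊆ T ∧ (0 : Matrix (Fin 2) (Fin 2) ℤ) ∈ M ∧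
        (∀ A ∈ M, ∀ B ∈ M, A + B ∈ M) ∧ (∀ A ∈ M, -A ∈ M) ∧
        (∀ A ∈ T, ∀ B ∈ M, A * B ∈ M ∧ B * A ∈ M)) ∧
      -- `M` is idempotent: `M² = M`
      {C | ∃ (n : ℕ) (f g : Fin n → Matrix (Fin 2) (Fin 2) ℤ),
          (∀ i, f i ∈ M) ∧ (∀ i, g i ∈ M) ∧ C = ∑ i, f i * g i} = M :=
  stmt_15_general p
end

section
/- Let D be a discrete valuation ring with maximal ideal (π) and let T₂ ⊆ M₃(D) be the ring of 3×3 matrices over D whose strictly upper-triangular entries lie in (π). Define Q₁ = {A ∈ T₂ : A₃₃ ∈ (π)}, Q₂ = {A ∈ T₂ : A₂₂ ∈ (π)}, Q₃ = {A ∈ T₂ : A₁₁ ∈ (π)}. Then Q₁Q₂ ≠ Q₂Q₁; specifically Q₂Q₁ = Q₁ ∩ Q₂ = {A ∈ T₂ : A₂₂, A₃₃ ∈ (π)} while Q₁Q₂ = {A ∈ T₂ : A₂₂, A₃₂, A₃₃ ∈ (π)}. -/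
/-- Membership in the ring `T₂`: 3×3 matrices over a DVR `D` whose strictly
upper-triangular entries lie in the maximal ideal `(π)`. -/
def memT2 {D : Type*} [CommRing D] (π : D) (A : Matrix (Fin 3) (Fin 3) D) : Prop :=
  π ∣ A 0 1 ∧ π ∣ A 0 2 ∧ π ∣ A 1 2

/-- The product of two sets of matrices as ideals: the additive span of pairwise
products, i.e. the set of all finite sums `∑ xᵢyᵢ` with `xᵢ ∈ X`, `yᵢ ∈ Y`. -/
def idealMul {D : Type*} [CommRing D]
    (X Y : Set (Matrix (Fin 3) (Fin 3) D)) : Set (Matrix (Fin 3) (Fin 3) D) :=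
  {C | ∃ (n : ℕ) (f g : Fin n → Matrix (Fin 3) (Fin 3) D),
    (∀ i, f i ∈ X) ∧ (∀ i, g i ∈ Y) ∧ C = ∑ i, f i * g i}

lemma idealMul_mul_mem {D : Type*} [CommRing D]
    {X Y : Set (Matrix (Fin 3) (Fin 3) D)} {x y : Matrix (Fin 3) (Fin 3) D}
    (hx : x ∈ X) (hy : y ∈ Y) : x * y ∈ idealMul X Y :=
  ⟨1, fun _ => x, fun _ => y, fun _ => hx, fun _ => hy, by simp⟩

lemma idealMul_add_mem {D : Type*} [CommRing D]
    {X Y : Set (Matrix (Fin 3) (Fin 3) D)} {a b : Matrix (Fin 3) (Fin 3) D}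
    (ha : a ∈ idealMul X Y) (hb : b ∈ idealMul X Y) : a + b ∈ idealMul X Y := by
  obtain ⟨n, f, g, hf, hg, rfl⟩ := ha
  obtain ⟨m, f', g', hf', hg', rfl⟩ := hb
  refine ⟨n + m, Fin.append f f', Fin.append g g', ?_, ?_, ?_⟩
  · intro i
    rcases Nat.lt_or_ge (i : ℕ) n with h | h
    · have : i = Fin.castAdd m ⟨i, h⟩ := by ext; simp
      rw [this, Fin.append_left]; exact hf _
    · have : i = Fin.natAdd n ⟨(i : ℕ) - n, by omega⟩ := by ext; simp; omega
      rw [this, Fin.append_right]; exact hf' _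
  · intro i
    rcases Nat.lt_or_ge (i : ℕ) n with h | h
    · have : i = Fin.castAdd m ⟨i, h⟩ := by ext; simp
      rw [this, Fin.append_left]; exact hg _
    · have : i = Fin.natAdd n ⟨(i : ℕ) - n, by omega⟩ := by ext; simp; omega
      rw [this, Fin.append_right]; exact hg' _
  · rw [Fin.sum_univ_add]
    congr 1 <;> apply Finset.sum_congr rfl <;> intro i _ <;>
      simp [Fin.append_left, Fin.append_right]

lemma entry_dvd {D : Type*} [CommRing D] {π : D} (x y : Matrix (Fin 3) (Fin 3) D) (a b : Fin 3)
    (h0 : π ∣ x a 0 ∨ π ∣ y 0 b) (h1 : π ∣ x a 1 ∨ π ∣ y 1 b)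
    (h2 : π ∣ x a 2 ∨ π ∣ y 2 b) : π ∣ (x * y) a b := by
  rw [Matrix.mul_apply, Fin.sum_univ_three]
  refine dvd_add (dvd_add ?_ ?_) ?_
  · rcases h0 with h | h
    exacts [h.mul_right _, h.mul_left _]
  · rcases h1 with h | h
    exacts [h.mul_right _, h.mul_left _]
  · rcases h2 with h | h
    exacts [h.mul_right _, h.mul_left _]

lemma sum_entry_dvd {D : Type*} [CommRing D] {π : D} {n : ℕ}
    (M : Fin n → Matrix (Fin 3) (Fin 3) D) (a b : Fin 3)
    (h : ∀ i, π ∣ M i a b) : π ∣ (∑ i, M i) a b := by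
  rw [Matrix.sum_apply]
  exact Finset.dvd_sum fun i _ => h i

/-- In the HNP ring `T₂` (3×3 matrices over a DVR `D` with strictly upper-triangular
entries in `(π)`), with maximal ideals `Q₁ = {A ∈ T₂ : A₃₃ ∈ (π)}` and
`Q₂ = {A ∈ T₂ : A₂₂ ∈ (π)}`, one has `Q₂Q₁ = Q₁ ∩ Q₂` while
`Q₁Q₂ = {A ∈ T₂ : A₂₂, A₃₂, A₃₃ ∈ (π)}`; in particular `Q₁Q₂ ≠ Q₂Q₁`.
(Rows and columns are indexed `0,1,2`, so `A₂₂ = A 1 1`, `A₃₂ = A 2 1`, `A₃₃ = A 2 2`.) -/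
theorem stmt_16 {D : Type*} [CommRing D] [IsDomain D] [IsDiscreteValuationRing D]
    (π : D) (hπ : Irreducible π)
    (Q₁ Q₂ : Set (Matrix (Fin 3) (Fin 3) D))
    (hQ₁ : Q₁ = {A | memT2 π A ∧ π ∣ A 2 2})
    (hQ₂ : Q₂ = {A | memT2 π A ∧ π ∣ A 1 1}) :
    idealMul Q₂ Q₁ = Q₁ ∩ Q₂ ∧
    idealMul Q₁ Q₂ = {A | memT2 π A ∧ π ∣ A 1 1 ∧ π ∣ A 2 1 ∧ π ∣ A 2 2} ∧
    idealMul Q₁ Q₂ ≠ idealMul Q₂ Q₁ := by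
  subst hQ₁ hQ₂
  set E := fun (i j : Fin 3) (c : D) => Matrix.single i j c with hE
  -- divisibility of entries of standard basis matrices
  have hne : ∀ (i j : Fin 3) (c : D) (a b : Fin 3), ¬(i = a ∧ j = b) →
      π ∣ E i j c a b := by
    intro i j c a b h
    show π ∣ Matrix.single i j c a b
    rw [Matrix.single_apply_of_ne _ _ _ _ _ h]
    exact dvd_zero _
  have hsame : ∀ (i j : Fin 3) (c : D), π ∣ c → π ∣ E i j c i j := by
    intro i j c h
    show π ∣ Matrix.single i j c i j
    rw [Matrix.single_apply_same]
    exact h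
  -- membership lemmas for standard basis matrices
  have mQ1col0 : ∀ (i : Fin 3) (c : D), E i 0 c ∈ {A | memT2 π A ∧ π ∣ A 2 2} := by
    intro i c
    exact ⟨⟨hne _ _ _ _ _ (by simp), hne _ _ _ _ _ (by simp),
      hne _ _ _ _ _ (by simp)⟩, hne _ _ _ _ _ (by simp)⟩
  have mQ2col0 : ∀ (i : Fin 3) (c : D), E i 0 c ∈ {A | memT2 π A ∧ π ∣ A 1 1} := by
    intro i c
    exact ⟨⟨hne _ _ _ _ _ (by simp), hne _ _ _ _ _ (by simp),
      hne _ _ _ _ _ (by simp)⟩, hne _ _ _ _ _ (by simp)⟩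
  have mQ1_11 : ∀ c : D, E 1 1 c ∈ {A | memT2 π A ∧ π ∣ A 2 2} :=
    fun c => ⟨⟨hne _ _ _ _ _ (by decide), hne _ _ _ _ _ (by decide),
      hne _ _ _ _ _ (by decide)⟩, hne _ _ _ _ _ (by decide)⟩
  have mQ2_21 : ∀ c : D, E 2 1 c ∈ {A | memT2 π A ∧ π ∣ A 1 1} :=
    fun c => ⟨⟨hne _ _ _ _ _ (by decide), hne _ _ _ _ _ (by decide),
      hne _ _ _ _ _ (by decide)⟩, hne _ _ _ _ _ (by decide)⟩
  have mQ2_01 : ∀ c : D, π ∣ c → E 0 1 c ∈ {A | memT2 π A ∧ π ∣ A 1 1} :=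
    fun c h => ⟨⟨hsame _ _ _ h, hne _ _ _ _ _ (by decide),
      hne _ _ _ _ _ (by decide)⟩, hne _ _ _ _ _ (by decide)⟩
  have mQ2_11 : ∀ c : D, π ∣ c → E 1 1 c ∈ {A | memT2 π A ∧ π ∣ A 1 1} :=
    fun c h => ⟨⟨hne _ _ _ _ _ (by decide), hne _ _ _ _ _ (by decide),
      hne _ _ _ _ _ (by decide)⟩, hsame _ _ _ h⟩
  have mQ1_02 : E 0 2 π ∈ {A | memT2 π A ∧ π ∣ A 2 2} :=
    ⟨⟨hne _ _ _ _ _ (by decide), hsame _ _ _ dvd_rfl,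
      hne _ _ _ _ _ (by decide)⟩, hne _ _ _ _ _ (by decide)⟩
  have mQ2_02 : E 0 2 π ∈ {A | memT2 π A ∧ π ∣ A 1 1} :=
    ⟨⟨hne _ _ _ _ _ (by decide), hsame _ _ _ dvd_rfl,
      hne _ _ _ _ _ (by decide)⟩, hne _ _ _ _ _ (by decide)⟩
  have mQ2_01π : E 0 1 π ∈ {A | memT2 π A ∧ π ∣ A 1 1} := mQ2_01 π dvd_rfl
  have hmul : ∀ (i j k : Fin 3) (a b : D), E i j a * E j k b = E i k (a * b) := by
    intro i j k a b
    exact Matrix.single_mul_single_same _ _ _ _ _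
  have eq1 : idealMul {A | memT2 π A ∧ π ∣ A 1 1} {A | memT2 π A ∧ π ∣ A 2 2}
      = {A | memT2 π A ∧ π ∣ A 2 2} ∩ {A | memT2 π A ∧ π ∣ A 1 1} := by
    ext A
    constructor
    · rintro ⟨n, f, g, hf, hg, rfl⟩
      refine ⟨⟨⟨?_, ?_, ?_⟩, ?_⟩, ⟨?_, ?_, ?_⟩, ?_⟩ <;>
        refine sum_entry_dvd _ _ _ fun i => ?_
      · exact entry_dvd _ _ _ _ (Or.inr (hg i).1.1) (Or.inl (hf i).1.1) (Or.inl (hf i).1.2.1)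
      · exact entry_dvd _ _ _ _ (Or.inr (hg i).1.2.1) (Or.inl (hf i).1.1) (Or.inl (hf i).1.2.1)
      · exact entry_dvd _ _ _ _ (Or.inr (hg i).1.2.1) (Or.inr (hg i).1.2.2) (Or.inl (hf i).1.2.2)
      · exact entry_dvd _ _ _ _ (Or.inr (hg i).1.2.1) (Or.inr (hg i).1.2.2) (Or.inr (hg i).2)
      · exact entry_dvd _ _ _ _ (Or.inr (hg i).1.1) (Or.inl (hf i).1.1) (Or.inl (hf i).1.2.1)
      · exact entry_dvd _ _ _ _ (Or.inr (hg i).1.2.1) (Or.inl (hf i).1.1) (Or.inl (hf i).1.2.1)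
      · exact entry_dvd _ _ _ _ (Or.inr (hg i).1.2.1) (Or.inr (hg i).1.2.2) (Or.inl (hf i).1.2.2)
      · exact entry_dvd _ _ _ _ (Or.inr (hg i).1.1) (Or.inl (hf i).2) (Or.inl (hf i).1.2.2)
    · rintro ⟨⟨⟨h01, h02, h12⟩, h22⟩, -, h11⟩
      obtain ⟨b01, e01⟩ := h01
      obtain ⟨b02, e02⟩ := h02
      obtain ⟨b11, e11⟩ := h11
      obtain ⟨b12, e12⟩ := h12
      obtain ⟨b22, e22⟩ := h22
      have key : A = E 0 0 (A 0 0) * E 0 0 1 + E 1 0 (A 1 0) * E 0 0 1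
          + E 2 0 (A 2 0) * E 0 0 1 + E 2 1 (A 2 1) * E 1 1 1
          + E 0 1 (π * b01) * E 1 1 1 + E 0 0 b02 * E 0 2 π
          + E 1 1 (π * b11) * E 1 1 1 + E 1 0 b12 * E 0 2 π
          + E 2 0 b22 * E 0 2 π := by
        simp only [hmul, mul_one]
        ext a b
        fin_cases a <;> fin_cases b <;>
          simp [hE, Matrix.single, e01, e02, e11, e12, e22, mul_comm]
      rw [key]
      refine idealMul_add_mem (idealMul_add_mem (idealMul_add_mem (idealMul_add_mem
        (idealMul_add_mem (idealMul_add_mem (idealMul_add_mem (idealMul_add_mem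
        ?_ ?_) ?_) ?_) ?_) ?_) ?_) ?_) ?_
      · exact idealMul_mul_mem (mQ2col0 _ _) (mQ1col0 _ _)
      · exact idealMul_mul_mem (mQ2col0 _ _) (mQ1col0 _ _)
      · exact idealMul_mul_mem (mQ2col0 _ _) (mQ1col0 _ _)
      · exact idealMul_mul_mem (mQ2_21 _) (mQ1_11 _)
      · exact idealMul_mul_mem (mQ2_01 _ (dvd_mul_right _ _)) (mQ1_11 _)
      · exact idealMul_mul_mem (mQ2col0 _ _) mQ1_02
      · exact idealMul_mul_mem (mQ2_11 _ (dvd_mul_right _ _)) (mQ1_11 _)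
      · exact idealMul_mul_mem (mQ2col0 _ _) mQ1_02
      · exact idealMul_mul_mem (mQ2col0 _ _) mQ1_02
  have eq2 : idealMul {A | memT2 π A ∧ π ∣ A 2 2} {A | memT2 π A ∧ π ∣ A 1 1}
      = {A | memT2 π A ∧ π ∣ A 1 1 ∧ π ∣ A 2 1 ∧ π ∣ A 2 2} := by
    ext A
    constructor
    · rintro ⟨n, f, g, hf, hg, rfl⟩
      refine ⟨⟨?_, ?_, ?_⟩, ?_, ?_, ?_⟩ <;> refine sum_entry_dvd _ _ _ fun i => ?_
      · exact entry_dvd _ _ _ _ (Or.inr (hg i).1.1) (Or.inl (hf i).1.1) (Or.inl (hf i).1.2.1)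
      · exact entry_dvd _ _ _ _ (Or.inr (hg i).1.2.1) (Or.inl (hf i).1.1) (Or.inl (hf i).1.2.1)
      · exact entry_dvd _ _ _ _ (Or.inr (hg i).1.2.1) (Or.inr (hg i).1.2.2) (Or.inl (hf i).1.2.2)
      · exact entry_dvd _ _ _ _ (Or.inr (hg i).1.1) (Or.inr (hg i).2) (Or.inl (hf i).1.2.2)
      · exact entry_dvd _ _ _ _ (Or.inr (hg i).1.1) (Or.inr (hg i).2) (Or.inl (hf i).2)
      · exact entry_dvd _ _ _ _ (Or.inr (hg i).1.2.1) (Or.inr (hg i).1.2.2) (Or.inl (hf i).2)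
    · rintro ⟨⟨h01, h02, h12⟩, h11, h21, h22⟩
      obtain ⟨b01, e01⟩ := h01
      obtain ⟨b02, e02⟩ := h02
      obtain ⟨b11, e11⟩ := h11
      obtain ⟨b12, e12⟩ := h12
      obtain ⟨b21, e21⟩ := h21
      obtain ⟨b22, e22⟩ := h22
      have key : A = E 0 0 (A 0 0) * E 0 0 1 + E 1 0 (A 1 0) * E 0 0 1
          + E 2 0 (A 2 0) * E 0 0 1
          + E 0 0 b01 * E 0 1 π + E 0 0 b02 * E 0 2 π
          + E 1 0 b11 * E 0 1 π + E 1 0 b12 * E 0 2 π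
          + E 2 0 b21 * E 0 1 π + E 2 0 b22 * E 0 2 π := by
        simp only [hmul, mul_one]
        ext a b
        fin_cases a <;> fin_cases b <;>
          simp [hE, Matrix.single, e01, e02, e11, e12, e21, e22, mul_comm]
      rw [key]
      refine idealMul_add_mem (idealMul_add_mem (idealMul_add_mem (idealMul_add_mem
        (idealMul_add_mem (idealMul_add_mem (idealMul_add_mem (idealMul_add_mem
        ?_ ?_) ?_) ?_) ?_) ?_) ?_) ?_) ?_
      · exact idealMul_mul_mem (mQ1col0 _ _) (mQ2col0 _ _)
      · exact idealMul_mul_mem (mQ1col0 _ _) (mQ2col0 _ _)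
      · exact idealMul_mul_mem (mQ1col0 _ _) (mQ2col0 _ _)
      · exact idealMul_mul_mem (mQ1col0 _ _) mQ2_01π
      · exact idealMul_mul_mem (mQ1col0 _ _) mQ2_02
      · exact idealMul_mul_mem (mQ1col0 _ _) mQ2_01π
      · exact idealMul_mul_mem (mQ1col0 _ _) mQ2_02
      · exact idealMul_mul_mem (mQ1col0 _ _) mQ2_01π
      · exact idealMul_mul_mem (mQ1col0 _ _) mQ2_02
  refine ⟨eq1, eq2, ?_⟩
  intro heq
  rw [eq1, eq2] at heq
  have hM : E 2 1 (1 : D) ∈ {A | memT2 π A ∧ π ∣ A 2 2} ∩ {A | memT2 π A ∧ π ∣ A 1 1} :=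
    ⟨⟨⟨hne _ _ _ _ _ (by decide), hne _ _ _ _ _ (by decide),
      hne _ _ _ _ _ (by decide)⟩, hne _ _ _ _ _ (by decide)⟩, mQ2_21 1⟩
  rw [← heq] at hM
  have : π ∣ Matrix.single 2 1 (1 : D) 2 1 := hM.2.2.1
  rw [Matrix.single_apply_same] at this
  exact hπ.not_isUnit (isUnit_of_dvd_one this)
end

section
/- With T₂ and Q₁, Q₂ as above (D a DVR with uniformizer π, T₂ the ring of 3×3 matrices over D with strictly upper-triangular entries in (π), Qᵢ the maximal ideals), the ideal identity Q₁Q₂Q₁ = Q₁Q₂ holds; in particular the monoid of nonzero ideals of T₂ under multiplication is not cancellative. -/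
/-- `X` is a two-sided ideal of the ring `T₂`. -/
def isIdealT2 {D : Type*} [CommRing D] (π : D)
    (X : Set (Matrix (Fin 3) (Fin 3) D)) : Prop :=
  (∀ A ∈ X, memT2 π A) ∧ (0 : Matrix (Fin 3) (Fin 3) D) ∈ X ∧
    (∀ A ∈ X, ∀ B ∈ X, A + B ∈ X) ∧ (∀ A ∈ X, -A ∈ X) ∧
    (∀ A, memT2 π A → ∀ B ∈ X, A * B ∈ X ∧ B * A ∈ X)

/-- The set `S = Q₁Q₂`: matrices whose columns 1 and 2 have all entries
divisible by `π`. -/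
def auxS {D : Type*} [CommRing D] (π : D) : Set (Matrix (Fin 3) (Fin 3) D) :=
  {C | π ∣ C 0 1 ∧ π ∣ C 0 2 ∧ π ∣ C 1 1 ∧ π ∣ C 1 2 ∧ π ∣ C 2 1 ∧ π ∣ C 2 2}

section aux
variable {D : Type*} [CommRing D] {π : D}

lemma aux_memT2_of_S {A : Matrix (Fin 3) (Fin 3) D} (h : A ∈ auxS π) : memT2 π A :=
  ⟨h.1, h.2.1, h.2.2.2.1⟩

/-- `T₂ · T₂ ⊆ T₂`. -/
lemma aux_t2_mul_t2 {A B : Matrix (Fin 3) (Fin 3) D}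
    (hA : memT2 π A) (hB : memT2 π B) : memT2 π (A * B) := by
  obtain ⟨a1, a2, a3⟩ := hA
  obtain ⟨b1, b2, b3⟩ := hB
  refine ⟨?_, ?_, ?_⟩ <;>
    simp only [Matrix.mul_apply, Fin.sum_univ_three] <;>
    refine dvd_add (dvd_add ?_ ?_) ?_ <;>
    first
      | exact dvd_mul_of_dvd_left (by assumption) _
      | exact dvd_mul_of_dvd_right (by assumption) _

/-- `Q₁ · Q₂ ⊆ S`. -/
lemma aux_q1_mul_q2 {A B : Matrix (Fin 3) (Fin 3) D}
    (hA : memT2 π A) (hA' : π ∣ A 2 2) (hB : memT2 π B) (hB' : π ∣ B 1 1) :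
    A * B ∈ auxS π := by
  obtain ⟨a1, a2, a3⟩ := hA
  obtain ⟨b1, b2, b3⟩ := hB
  refine ⟨?_, ?_, ?_, ?_, ?_, ?_⟩ <;>
    simp only [Matrix.mul_apply, Fin.sum_univ_three] <;>
    refine dvd_add (dvd_add ?_ ?_) ?_ <;>
    first
      | exact dvd_mul_of_dvd_left (by assumption) _
      | exact dvd_mul_of_dvd_right (by assumption) _

/-- `T₂ · S ⊆ S`. -/
lemma aux_t2_mul_S {A B : Matrix (Fin 3) (Fin 3) D}
    (hA : memT2 π A) (hB : B ∈ auxS π) : A * B ∈ auxS π := by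
  obtain ⟨a1, a2, a3⟩ := hA
  obtain ⟨b1, b2, b3, b4, b5, b6⟩ := hB
  refine ⟨?_, ?_, ?_, ?_, ?_, ?_⟩ <;>
    simp only [Matrix.mul_apply, Fin.sum_univ_three] <;>
    refine dvd_add (dvd_add ?_ ?_) ?_ <;>
    first
      | exact dvd_mul_of_dvd_left (by assumption) _
      | exact dvd_mul_of_dvd_right (by assumption) _

/-- `S · T₂ ⊆ S`. -/
lemma aux_S_mul_t2 {A B : Matrix (Fin 3) (Fin 3) D}
    (hA : A ∈ auxS π) (hB : memT2 π B) : A * B ∈ auxS π := by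
  obtain ⟨a1, a2, a3, a4, a5, a6⟩ := hA
  obtain ⟨b1, b2, b3⟩ := hB
  refine ⟨?_, ?_, ?_, ?_, ?_, ?_⟩ <;>
    simp only [Matrix.mul_apply, Fin.sum_univ_three] <;>
    refine dvd_add (dvd_add ?_ ?_) ?_ <;>
    first
      | exact dvd_mul_of_dvd_left (by assumption) _
      | exact dvd_mul_of_dvd_right (by assumption) _

/-- `T₂ · Q₁ ⊆ Q₁` and `Q₁ · T₂ ⊆ Q₁` (the extra `(2,2)` condition). -/
lemma aux_t2_mul_q1 {A B : Matrix (Fin 3) (Fin 3) D}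
    (hA : memT2 π A) (hB : memT2 π B) (hB' : π ∣ B 2 2) :
    π ∣ (A * B) 2 2 := by
  obtain ⟨a1, a2, a3⟩ := hA
  obtain ⟨b1, b2, b3⟩ := hB
  simp only [Matrix.mul_apply, Fin.sum_univ_three]
  refine dvd_add (dvd_add ?_ ?_) ?_ <;>
    first
      | exact dvd_mul_of_dvd_left (by assumption) _
      | exact dvd_mul_of_dvd_right (by assumption) _

lemma aux_q1_mul_t2 {A B : Matrix (Fin 3) (Fin 3) D}
    (hA : memT2 π A) (hA' : π ∣ A 2 2) (hB : memT2 π B) :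
    π ∣ (A * B) 2 2 := by
  obtain ⟨a1, a2, a3⟩ := hA
  obtain ⟨b1, b2, b3⟩ := hB
  simp only [Matrix.mul_apply, Fin.sum_univ_three]
  refine dvd_add (dvd_add ?_ ?_) ?_ <;>
    first
      | exact dvd_mul_of_dvd_left (by assumption) _
      | exact dvd_mul_of_dvd_right (by assumption) _

/-- Sums of elements of `S` lie in `S`. -/
lemma aux_sum_mem_S {n : ℕ} {h : Fin n → Matrix (Fin 3) (Fin 3) D}
    (hh : ∀ i, h i ∈ auxS π) : (∑ i, h i) ∈ auxS π := by
  refine ⟨?_, ?_, ?_, ?_, ?_, ?_⟩ <;>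
    · rw [show ∀ a b : Fin 3, (∑ i, h i) a b = ∑ i, h i a b from
        fun a b => by simp [Finset.sum_apply, Matrix.sum_apply]]
      exact Finset.dvd_sum fun i _ => by
        first
          | exact (hh i).1 | exact (hh i).2.1 | exact (hh i).2.2.1
          | exact (hh i).2.2.2.1 | exact (hh i).2.2.2.2.1 | exact (hh i).2.2.2.2.2

/-- Every element of `S` is a sum of three products `Xᵢ Yᵢ` where the `Xᵢ` are
supported on a single column (column 0 for `X₁, X₃`, with `X₂ ∈ S`), and
`Y₁ = E₀₀`, `Y₂ = E₁₁` or `πE₀₁`, `Y₃ = πE₀₂`. We record the two decompositions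
we need. -/
lemma aux_S_sub_mul {C : Matrix (Fin 3) (Fin 3) D} (hC : C ∈ auxS π)
    (X Y : Set (Matrix (Fin 3) (Fin 3) D))
    (hX1 : ∀ a b c : D, (Matrix.of ![![a, 0, 0], ![b, 0, 0], ![c, 0, 0]]) ∈ X)
    (hY1 : (Matrix.of ![![(1:D), 0, 0], ![0, 0, 0], ![0, 0, 0]]) ∈ Y)
    (hY2 : (Matrix.of ![![(0:D), π, 0], ![0, 0, 0], ![0, 0, 0]]) ∈ Y)
    (hY3 : (Matrix.of ![![(0:D), 0, π], ![0, 0, 0], ![0, 0, 0]]) ∈ Y) :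
    C ∈ idealMul X Y := by
  obtain ⟨⟨d01, h01⟩, ⟨d02, h02⟩, ⟨d11, h11⟩, ⟨d12, h12⟩, ⟨d21, h21⟩, ⟨d22, h22⟩⟩ := hC
  refine ⟨3,
    ![Matrix.of ![![C 0 0, 0, 0], ![C 1 0, 0, 0], ![C 2 0, 0, 0]],
      Matrix.of ![![d01, 0, 0], ![d11, 0, 0], ![d21, 0, 0]],
      Matrix.of ![![d02, 0, 0], ![d12, 0, 0], ![d22, 0, 0]]],
    ![Matrix.of ![![(1:D), 0, 0], ![0, 0, 0], ![0, 0, 0]],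
      Matrix.of ![![(0:D), π, 0], ![0, 0, 0], ![0, 0, 0]],
      Matrix.of ![![(0:D), 0, π], ![0, 0, 0], ![0, 0, 0]]],
    ?_, ?_, ?_⟩
  · intro i; fin_cases i <;> exact hX1 _ _ _
  · intro i; fin_cases i <;> assumption
  · ext i j
    fin_cases i <;> fin_cases j <;>
      simp [Fin.sum_univ_three, Matrix.add_apply, Matrix.mul_apply,
        h01, h02, h11, h12, h21, h22, Matrix.vecHead, Matrix.vecTail, mul_comm]

/-- `idealMul Q₁ Q₂ = S`. -/
lemma aux_Q1Q2_eq_S {π : D} (Q₁ Q₂ : Set (Matrix (Fin 3) (Fin 3) D))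
    (hQ₁ : Q₁ = {A | memT2 π A ∧ π ∣ A 2 2})
    (hQ₂ : Q₂ = {A | memT2 π A ∧ π ∣ A 1 1}) :
    idealMul Q₁ Q₂ = auxS π := by
  subst hQ₁ hQ₂
  apply Set.Subset.antisymm
  · rintro C ⟨n, f, g, hf, hg, rfl⟩
    exact aux_sum_mem_S fun i =>
      aux_q1_mul_q2 (hf i).1 (hf i).2 (hg i).1 (hg i).2
  · intro C hC
    refine aux_S_sub_mul hC _ _ ?_ ?_ ?_ ?_
    · intro a b c
      refine ⟨⟨?_, ?_, ?_⟩, ?_⟩ <;> simp [memT2, Matrix.vecHead, Matrix.vecTail]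
    · refine ⟨⟨?_, ?_, ?_⟩, ?_⟩ <;> simp [memT2, Matrix.vecHead, Matrix.vecTail]
    · refine ⟨⟨?_, ?_, ?_⟩, ?_⟩ <;> simp [memT2, Matrix.vecHead, Matrix.vecTail]
    · refine ⟨⟨?_, ?_, ?_⟩, ?_⟩ <;> simp [memT2, Matrix.vecHead, Matrix.vecTail]

end aux

/-- In the HNP ring `T₂` with maximal ideals `Q₁ = {A ∈ T₂ : A₃₃ ∈ (π)}` and
`Q₂ = {A ∈ T₂ : A₂₂ ∈ (π)}`, the ideal identity `Q₁Q₂Q₁ = Q₁Q₂` holds; in particular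
the monoid of nonzero (two-sided) ideals of `T₂` under ideal multiplication is not
cancellative. -/
theorem stmt_17 {D : Type*} [CommRing D] [IsDomain D] [IsDiscreteValuationRing D]
    (π : D) (hπ : Irreducible π)
    (Q₁ Q₂ : Set (Matrix (Fin 3) (Fin 3) D))
    (hQ₁ : Q₁ = {A | memT2 π A ∧ π ∣ A 2 2})
    (hQ₂ : Q₂ = {A | memT2 π A ∧ π ∣ A 1 1}) :
    idealMul (idealMul Q₁ Q₂) Q₁ = idealMul Q₁ Q₂ ∧
    ∃ I J K : Set (Matrix (Fin 3) (Fin 3) D),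
      isIdealT2 π I ∧ isIdealT2 π J ∧ isIdealT2 π K ∧
      I ≠ {0} ∧ J ≠ {0} ∧ K ≠ {0} ∧
      idealMul I J = idealMul I K ∧ J ≠ K := by
  have hS := aux_Q1Q2_eq_S Q₁ Q₂ hQ₁ hQ₂
  -- membership of the three standard right factors in Q₁
  have hE00Q1 : (Matrix.of ![![(1:D), 0, 0], ![0, 0, 0], ![0, 0, 0]]) ∈ Q₁ := by
    rw [hQ₁]; refine ⟨⟨?_, ?_, ?_⟩, ?_⟩ <;> simp [memT2, Matrix.vecHead, Matrix.vecTail]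
  have hE11Q1 : (Matrix.of ![![(0:D), 0, 0], ![0, 1, 0], ![0, 0, 0]]) ∈ Q₁ := by
    rw [hQ₁]; refine ⟨⟨?_, ?_, ?_⟩, ?_⟩ <;> simp [memT2, Matrix.vecHead, Matrix.vecTail]
  have hE02Q1 : (Matrix.of ![![(0:D), 0, π], ![0, 0, 0], ![0, 0, 0]]) ∈ Q₁ := by
    rw [hQ₁]; refine ⟨⟨?_, ?_, ?_⟩, ?_⟩ <;> simp [memT2, Matrix.vecHead, Matrix.vecTail]
  -- `S ⊆ idealMul S X` whenever X contains E00, E11, πE02 : columnwise decomposition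
  have hSsub : ∀ (X : Set (Matrix (Fin 3) (Fin 3) D)),
      (Matrix.of ![![(1:D), 0, 0], ![0, 0, 0], ![0, 0, 0]]) ∈ X →
      (Matrix.of ![![(0:D), 0, 0], ![0, 1, 0], ![0, 0, 0]]) ∈ X →
      (Matrix.of ![![(0:D), 0, π], ![0, 0, 0], ![0, 0, 0]]) ∈ X →
      ∀ C ∈ auxS π, C ∈ idealMul (auxS π) X := by
    intro X h1 h2 h3 C hC
    obtain ⟨⟨d01, h01⟩, ⟨d02, h02⟩, ⟨d11, h11⟩, ⟨d12, h12⟩, ⟨d21, h21⟩, ⟨d22, h22⟩⟩ := hC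
    refine ⟨3,
      ![Matrix.of ![![C 0 0, 0, 0], ![C 1 0, 0, 0], ![C 2 0, 0, 0]],
        Matrix.of ![![0, C 0 1, 0], ![0, C 1 1, 0], ![0, C 2 1, 0]],
        Matrix.of ![![d02, 0, 0], ![d12, 0, 0], ![d22, 0, 0]]],
      ![Matrix.of ![![(1:D), 0, 0], ![0, 0, 0], ![0, 0, 0]],
        Matrix.of ![![(0:D), 0, 0], ![0, 1, 0], ![0, 0, 0]],
        Matrix.of ![![(0:D), 0, π], ![0, 0, 0], ![0, 0, 0]]],
      ?_, ?_, ?_⟩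
    · intro i; fin_cases i <;>
        refine ⟨?_, ?_, ?_, ?_, ?_, ?_⟩ <;>
        simp [h01, h11, h21, Matrix.vecHead, Matrix.vecTail]
    · intro i; fin_cases i <;> assumption
    · ext i j
      fin_cases i <;> fin_cases j <;>
        simp [Fin.sum_univ_three, Matrix.add_apply, Matrix.mul_apply,
          h01, h02, h11, h12, h21, h22, Matrix.vecHead, Matrix.vecTail, mul_comm]
  -- Q₁ ⊆ T₂
  have hQ1T2 : ∀ A ∈ Q₁, memT2 π A := by rw [hQ₁]; exact fun A hA => hA.1
  -- first part
  have part1 : idealMul (idealMul Q₁ Q₂) Q₁ = idealMul Q₁ Q₂ := by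
    rw [hS]
    apply Set.Subset.antisymm
    · rintro C ⟨n, f, g, hf, hg, rfl⟩
      exact aux_sum_mem_S fun i => aux_S_mul_t2 (hf i) (hQ1T2 _ (hg i))
    · exact hSsub Q₁ hE00Q1 hE11Q1 hE02Q1
  refine ⟨part1, auxS π, Q₁, {A | memT2 π A}, ?_, ?_, ?_, ?_, ?_, ?_, ?_, ?_⟩
  · -- isIdealT2 (auxS π)
    refine ⟨fun A hA => aux_memT2_of_S hA, ?_, ?_, ?_, ?_⟩
    · exact ⟨dvd_zero _, dvd_zero _, dvd_zero _, dvd_zero _, dvd_zero _, dvd_zero _⟩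
    · intro A hA B hB
      obtain ⟨a1, a2, a3, a4, a5, a6⟩ := hA
      obtain ⟨b1, b2, b3, b4, b5, b6⟩ := hB
      exact ⟨dvd_add a1 b1, dvd_add a2 b2, dvd_add a3 b3, dvd_add a4 b4,
        dvd_add a5 b5, dvd_add a6 b6⟩
    · intro A hA
      obtain ⟨a1, a2, a3, a4, a5, a6⟩ := hA
      exact ⟨a1.neg_right, a2.neg_right, a3.neg_right, a4.neg_right,
        a5.neg_right, a6.neg_right⟩
    · exact fun A hA B hB => ⟨aux_t2_mul_S hA hB, aux_S_mul_t2 hB hA⟩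
  · -- isIdealT2 Q₁
    rw [hQ₁]
    refine ⟨fun A hA => hA.1, ⟨⟨dvd_zero _, dvd_zero _, dvd_zero _⟩, dvd_zero _⟩,
      ?_, ?_, ?_⟩
    · rintro A ⟨⟨a1, a2, a3⟩, a4⟩ B ⟨⟨b1, b2, b3⟩, b4⟩
      exact ⟨⟨dvd_add a1 b1, dvd_add a2 b2, dvd_add a3 b3⟩, dvd_add a4 b4⟩
    · rintro A ⟨⟨a1, a2, a3⟩, a4⟩
      exact ⟨⟨a1.neg_right, a2.neg_right, a3.neg_right⟩, a4.neg_right⟩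
    · rintro A hA B ⟨hB, hB'⟩
      exact ⟨⟨aux_t2_mul_t2 hA hB, aux_t2_mul_q1 hA hB hB'⟩,
        ⟨aux_t2_mul_t2 hB hA, aux_q1_mul_t2 hB hB' hA⟩⟩
  · -- isIdealT2 T₂
    refine ⟨fun A hA => hA, ⟨dvd_zero _, dvd_zero _, dvd_zero _⟩, ?_, ?_, ?_⟩
    · rintro A ⟨a1, a2, a3⟩ B ⟨b1, b2, b3⟩
      exact ⟨dvd_add a1 b1, dvd_add a2 b2, dvd_add a3 b3⟩
    · rintro A ⟨a1, a2, a3⟩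
      exact ⟨a1.neg_right, a2.neg_right, a3.neg_right⟩
    · exact fun A hA B hB => ⟨aux_t2_mul_t2 hA hB, aux_t2_mul_t2 hB hA⟩
  · -- auxS π ≠ {0}
    intro h
    have hm : (Matrix.of ![![(1:D), 0, 0], ![0, 0, 0], ![0, 0, 0]]) ∈ auxS π := by
      refine ⟨?_, ?_, ?_, ?_, ?_, ?_⟩ <;> simp [Matrix.vecHead, Matrix.vecTail]
    rw [h] at hm
    have := congrFun (congrFun (Set.mem_singleton_iff.mp hm) 0) 0
    simp at this
  · -- Q₁ ≠ {0}
    intro h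
    have hm := hE00Q1
    rw [h] at hm
    have := congrFun (congrFun (Set.mem_singleton_iff.mp hm) 0) 0
    simp at this
  · -- T₂ ≠ {0}
    intro h
    have hm : (1 : Matrix (Fin 3) (Fin 3) D) ∈ {A | memT2 π A} := by
      refine ⟨?_, ?_, ?_⟩ <;> simp [Matrix.one_apply]
    rw [h] at hm
    have := congrFun (congrFun (Set.mem_singleton_iff.mp hm) 0) 0
    simp at this
  · -- idealMul S Q₁ = idealMul S T₂ (both equal S)
    have h1 : idealMul (auxS π) Q₁ = auxS π := by
      apply Set.Subset.antisymm
      · rintro C ⟨n, f, g, hf, hg, rfl⟩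
        exact aux_sum_mem_S fun i => aux_S_mul_t2 (hf i) (hQ1T2 _ (hg i))
      · exact hSsub Q₁ hE00Q1 hE11Q1 hE02Q1
    have h2 : idealMul (auxS π) {A | memT2 π A} = auxS π := by
      apply Set.Subset.antisymm
      · rintro C ⟨n, f, g, hf, hg, rfl⟩
        exact aux_sum_mem_S fun i => aux_S_mul_t2 (hf i) (hg i)
      · intro C hC
        refine ⟨1, ![C], ![1], fun i => by fin_cases i; exact hC,
          fun i => by fin_cases i; refine ⟨?_, ?_, ?_⟩ <;> simp [Matrix.one_apply], ?_⟩
        simp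
    rw [h1, h2]
  · -- Q₁ ≠ T₂
    intro h
    have h1 : (1 : Matrix (Fin 3) (Fin 3) D) ∈ {A | memT2 π A} := by
      refine ⟨?_, ?_, ?_⟩ <;> simp [Matrix.one_apply]
    rw [← h, hQ₁] at h1
    have : π ∣ (1 : Matrix (Fin 3) (Fin 3) D) 2 2 := h1.2
    rw [Matrix.one_apply_eq] at this
    exact hπ.not_isUnit (isUnit_of_dvd_one this)
end
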